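/- arXiv:1912.08705 — 8 statements merged into one kernel-verified Lean document; each statement's English description precedes it below -/
import Mathlib

section
/- If A, B ∈ SL₂(ℝ) satisfy tr(ABA⁻¹B⁻¹) = −2 (parabolic commutator), then the traces x = tr A, y = tr B, z = tr(AB) satisfy x² + y² + z² = xyz. -/
/-- If `A, B ∈ SL₂(ℝ)` have parabolic commutator, `tr(ABA⁻¹B⁻¹) = −2`, then
`x = tr A`, `y = tr B`, `z = tr(AB)` satisfy `x² + y² + z² = xyz`. -/
theorem markov_surface_of_parabolic_commutator
    (A B : Matrix.SpecialLinearGroup (Fin 2) ℝ)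
    (hpar : Matrix.trace ((↑(A * B * A⁻¹ * B⁻¹) : Matrix (Fin 2) (Fin 2) ℝ)) = -2)
    (x y z : ℝ)
    (hx : x = Matrix.trace ((↑A : Matrix (Fin 2) (Fin 2) ℝ)))
    (hy : y = Matrix.trace ((↑B : Matrix (Fin 2) (Fin 2) ℝ)))
    (hz : z = Matrix.trace ((↑(A * B) : Matrix (Fin 2) (Fin 2) ℝ))) :
    x ^ 2 + y ^ 2 + z ^ 2 = x * y * z := by
  have hA : Matrix.det (↑A : Matrix (Fin 2) (Fin 2) ℝ) = 1 := A.2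
  have hB : Matrix.det (↑B : Matrix (Fin 2) (Fin 2) ℝ) = 1 := B.2
  simp only [Matrix.SpecialLinearGroup.coe_mul, Matrix.SpecialLinearGroup.coe_inv,
    Matrix.trace_fin_two, Matrix.mul_apply, Fin.sum_univ_two, Matrix.adjugate_fin_two,
    Matrix.of_apply, Matrix.cons_val', Matrix.cons_val_zero, Matrix.cons_val_one,
    Matrix.head_cons, Matrix.head_fin_const, Matrix.empty_val', Matrix.cons_val_fin_one,
    Matrix.det_fin_two] at hpar hx hy hz hA hB ⊢
  subst hx hy hz
  nlinarith [hpar, hA, hB, sq_nonneg (A 0 0), sq_nonneg (B 0 0)]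
end

section
/- Every triple (x, y, z) of positive integers satisfying the Markov equation x² + y² + z² = 3xyz belongs to the smallest set of triples of positive integers that contains (1, 1, 1) and is closed under the Vieta involution τ: (x, y, z) ↦ (x, y, 3xy − z) and under all permutations of the three coordinates. -/
/-- The smallest set of triples that contains `(1, 1, 1)` and is closed under the
Vieta involution `τ : (x, y, z) ↦ (x, y, 3xy − z)` and under all permutations
of the three coordinates. -/
inductive MarkovSet : ℤ → ℤ → ℤ → Prop
  | base : MarkovSet 1 1 1
  | vieta {x y z : ℤ} : MarkovSet x y z → MarkovSet x y (3 * x * y - z)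
  | perm {x y z x' y' z' : ℤ} : MarkovSet x y z →
      List.Perm [x', y', z'] [x, y, z] → MarkovSet x' y' z'

lemma MarkovSet.swap12 {x y z : ℤ} (h : MarkovSet x y z) : MarkovSet y x z :=
  h.perm (List.Perm.swap x y [z])

lemma MarkovSet.swap23 {x y z : ℤ} (h : MarkovSet x y z) : MarkovSet x z y :=
  h.perm (List.Perm.cons x (List.Perm.swap y z []))

lemma markov_sorted : ∀ n : ℕ, ∀ x y z : ℤ, z.toNat ≤ n → 0 < x → x ≤ y → y ≤ z →
    x ^ 2 + y ^ 2 + z ^ 2 = 3 * x * y * z → MarkovSet x y z := by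
  intro n
  induction n with
  | zero =>
    intro x y z hn hx hxy hyz h
    omega
  | succ n ih =>
    intro x y z hn hx hxy hyz h
    by_cases hy1 : y = 1
    · have hx1 : x = 1 := by omega
      subst hx1; subst hy1
      have hz12 : (z - 1) * (z - 2) = 0 := by linear_combination h
      rcases mul_eq_zero.mp hz12 with h1 | h2
      · have : z = 1 := by omega
        subst this; exact MarkovSet.base
      · have : z = 2 := by omega
        subst this
        have := MarkovSet.vieta MarkovSet.base
        norm_num at this
        exact this
    · have hy2 : 2 ≤ y := by omega
      have hw : 0 < 3 * x * y - z := by nlinarith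
      have hfy : (y - z) * (y - (3 * x * y - z)) = x ^ 2 + 2 * y ^ 2 - 3 * x * y ^ 2 := by
        linear_combination -h
      have hneg : x ^ 2 + 2 * y ^ 2 - 3 * x * y ^ 2 < 0 := by nlinarith
      have hyz' : y < z := by
        rcases lt_or_eq_of_le hyz with h' | h'
        · exact h'
        · exfalso; rw [← h'] at hfy; nlinarith
      have hwy : 3 * x * y - z < y := by nlinarith
      have hyn : y.toNat ≤ n := by omega
      have hxyw : MarkovSet x y (3 * x * y - z) := by
        rcases le_total x (3 * x * y - z) with hc | hc
        · have hm : MarkovSet x (3 * x * y - z) y :=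
            ih x (3 * x * y - z) y hyn hx hc (le_of_lt hwy) (by linear_combination h)
          exact hm.swap23
        · have hm : MarkovSet (3 * x * y - z) x y :=
            ih (3 * x * y - z) x y hyn hw hc hxy (by linear_combination h)
          exact hm.swap12.swap23
      have := hxyw.vieta
      have hzz : 3 * x * y - (3 * x * y - z) = z := by ring
      rw [hzz] at this
      exact this

/-- **Markov's theorem.** Every triple of positive integers satisfying the Markov
equation `x² + y² + z² = 3xyz` is obtained from `(1, 1, 1)` by repeatedly applying
the Vieta involution and coordinate permutations. -/
theorem markov_triples_generated (x y z : ℤ) (hx : 0 < x) (hy : 0 < y) (hz : 0 < z)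
    (h : x ^ 2 + y ^ 2 + z ^ 2 = 3 * x * y * z) : MarkovSet x y z := by
  rcases le_total x y with hxy | hxy
  · rcases le_total y z with hyz | hyz
    · exact markov_sorted z.toNat x y z le_rfl hx hxy hyz h
    · rcases le_total x z with hxz | hxz
      · exact (markov_sorted y.toNat x z y le_rfl hx hxz hyz
          (by linear_combination h)).swap23
      · exact (markov_sorted y.toNat z x y le_rfl hz hxz hxy
          (by linear_combination h)).swap12.swap23
  · rcases le_total x z with hxz | hxz
    · exact (markov_sorted z.toNat y x z le_rfl hy hxy hxz (by linear_combination h)).swap12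
    · rcases le_total y z with hyz | hyz
      · exact (markov_sorted x.toNat y z x le_rfl hy hyz hxz
          (by linear_combination h)).swap12.swap23.swap12.swap23
      · exact (markov_sorted x.toNat z y x le_rfl hz hyz hxy
          (by linear_combination h)).swap12.swap12.swap23.swap12.swap23
end

section
/- If χ: G → ℂˣ is a group homomorphism of a finite group G into the multiplicative group of ℂ, then the linear polynomial Ψ_χ = Σ_{g∈G} χ(g) x_g divides the group determinant Θ_G in the polynomial ring ℂ[x_g : g ∈ G]. -/
open MvPolynomial

/-- **Linear factors of the group determinant (Dedekind–Frobenius).**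
If `χ : G → ℂˣ` is a homomorphism of a finite group `G` into `ℂˣ`, then the linear
polynomial `Ψ_χ = Σ_{g ∈ G} χ(g) x_g` divides the group determinant
`Θ_G = det (x_{g h⁻¹})_{g,h ∈ G}` in `ℂ[x_g : g ∈ G]`. -/
theorem linear_factor_of_group_determinant
    {G : Type*} [Group G] [Fintype G] [DecidableEq G] (χ : G →* ℂˣ) :
    (∑ g : G, MvPolynomial.C ((χ g : ℂ)) * MvPolynomial.X g) ∣
      Matrix.det (Matrix.of fun g h : G => (MvPolynomial.X (g * h⁻¹) : MvPolynomial G ℂ)) := by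
  set Ψ : MvPolynomial G ℂ := ∑ g : G, MvPolynomial.C ((χ g : ℂ)) * MvPolynomial.X g with hΨ
  set M : Matrix G G (MvPolynomial G ℂ) :=
    Matrix.of fun g h : G => (MvPolynomial.X (g * h⁻¹) : MvPolynomial G ℂ) with hM
  have h1 := Matrix.det_updateCol_sum M 1 (fun h => (MvPolynomial.C (((χ h : ℂ))⁻¹)))
  have hc1 : (MvPolynomial.C (((χ (1:G) : ℂ))⁻¹) : MvPolynomial G ℂ) = 1 := by
    simp
  rw [hc1, one_smul] at h1
  have hcol : (fun g => ∑ h : G, (MvPolynomial.C (((χ h : ℂ))⁻¹) : MvPolynomial G ℂ) • M g h)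
      = Ψ • (fun g => (MvPolynomial.C (((χ g : ℂ))⁻¹) : MvPolynomial G ℂ)) := by
    funext g
    have := Fintype.sum_equiv
      ((Equiv.inv G).trans (Equiv.mulRight g))
      (fun k : G => MvPolynomial.C ((χ g : ℂ))⁻¹ *
        (MvPolynomial.C ((χ k : ℂ)) * MvPolynomial.X k))
      (fun h : G => (MvPolynomial.C (((χ h : ℂ))⁻¹)) • M g h)
      (fun k => by
        have hu : ((χ (k⁻¹ * g) : ℂ))⁻¹ = ((χ g : ℂ))⁻¹ * (χ k : ℂ) := by
          have : (χ (k⁻¹ * g))⁻¹ = (χ g)⁻¹ * χ k := by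
            simp [map_mul, mul_inv_rev]
          calc ((χ (k⁻¹ * g) : ℂ))⁻¹ = (((χ (k⁻¹ * g))⁻¹ : ℂˣ) : ℂ) := by simp
            _ = ((((χ g)⁻¹ * χ k : ℂˣ)) : ℂ) := by rw [this]
            _ = ((χ g : ℂ))⁻¹ * (χ k : ℂ) := by simp
        simp only [Equiv.trans_apply, Equiv.inv_apply, Equiv.coe_mulRight, hM,
          Matrix.of_apply, smul_eq_mul, mul_inv_rev, inv_inv, mul_inv_cancel_left,
          mul_inv_cancel_left]
        rw [hu, smul_eq_mul, ← mul_assoc, ← MvPolynomial.C_mul])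
    rw [← this]
    simp only [Pi.smul_apply, smul_eq_mul, hΨ, Finset.mul_sum, Finset.sum_mul]
    refine Finset.sum_congr rfl fun k _ => by ring
  rw [hcol, Matrix.det_updateCol_smul] at h1
  exact ⟨_, h1.symm⟩
end

section
/- For any three 2×2 matrices A, B, C over a commutative ring, the Frobenius 3-character of the trace vanishes: tr(A)tr(B)tr(C) − tr(A)tr(BC) − tr(B)tr(AC) − tr(C)tr(AB) + tr(ABC) + tr(ACB) = 0. -/
/-- **Frobenius 3-character of the trace vanishes for 2×2 matrices.**
For any three `2×2` matrices `A, B, C` over a commutative ring: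
`tr(A)tr(B)tr(C) − tr(A)tr(BC) − tr(B)tr(AC) − tr(C)tr(AB) + tr(ABC) + tr(ACB) = 0`. -/
theorem frobenius_three_character_vanishes
    {R : Type*} [CommRing R] (A B C : Matrix (Fin 2) (Fin 2) R) :
    A.trace * B.trace * C.trace - A.trace * (B * C).trace - B.trace * (A * C).trace -
      C.trace * (A * B).trace + (A * B * C).trace + (A * C * B).trace = 0 := by
  simp [Matrix.trace, Matrix.diag, Matrix.mul_apply, Fin.sum_univ_two]
  ring
end

section
/- Let G be a group and χ: G → ℂ a trace-like function, i.e. χ(gh) = χ(hg) for all g, h ∈ G. Define χ₁ = χ and recursively χ_{k+1}(h₀, h₁, …, h_k) = χ(h₀)χ_k(h₁, …, h_k) − Σ_{j=1}^k χ_k(h₁, …, h₀h_j, …, h_k). Then for every k ≥ 1 and all h₁, …, h_k ∈ G, χ_k(h₁, …, h_k) = Σ_{σ ∈ S_k} sign(σ) ∏_{j=1}^s χ_{γ_j}(h₁, …, h_k), where σ = γ₁⋯γ_s is the disjoint cycle decomposition of σ (fixed points counted as cycles of length 1) and for a cycle γ = (i₁ i₂ … i_m), χ_γ(h₁,…,h_k)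 = χ(h_{i₁}h_{i₂}⋯h_{i_m}). -/
/-- The product `h_{i₁} h_{i₂} ⋯ h_{i_m}` along the cycle `c = (i₁ i₂ … i_m)`,
starting at the smallest element of the support of `c`. -/
def cycleProd {k : ℕ} {M : Type*} [Monoid M] (h : Fin k → M) (c : Equiv.Perm (Fin k)) : M :=
  if hc : c.support.Nonempty then
    ((List.range c.support.card).map fun j => h ((c ^ j) (c.support.min' hc))).prod
  else 1

/-- The Frobenius `k`-character of a function `χ : M → ℂ` defined by the cyclic
formula `χ_k(h₁,…,h_k) = Σ_{σ ∈ S_k} sign(σ) ∏_j χ_{γ_j}(h₁,…,h_k)`, the product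
being over the disjoint cycles `γ_j` of `σ`, with fixed points counted as cycles of
length 1 (each fixed point `i` contributing a factor `χ(h_i)`). -/
noncomputable def frobChar {M : Type*} [Monoid M] (χ : M → ℂ) (k : ℕ) (h : Fin k → M) : ℂ :=
  ∑ σ : Equiv.Perm (Fin k), ((Equiv.Perm.sign σ : ℤ) : ℂ) *
    ((∏ c ∈ σ.cycleFactorsFinset, χ (cycleProd h c)) *
      ∏ i ∈ Finset.univ.filter fun i => σ i = i, χ (h i))

/-- The Frobenius `k`-characters defined by the recursion `χ₁ = χ` and
`χ_{k+1}(h₀, h₁, …, h_k) = χ(h₀)·χ_k(h₁, …, h_k) − Σ_{j=1}^k χ_k(h₁, …, h₀h_j, …, h_k)`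
(with the convention `χ₀ = 1`). -/
noncomputable def frobRec {M : Type*} [Monoid M] (χ : M → ℂ) : (k : ℕ) → (Fin k → M) → ℂ
  | 0, _ => 1
  | k + 1, h =>
      χ (h 0) * frobRec χ k (fun i => h i.succ) -
        ∑ j : Fin k, frobRec χ k (Function.update (fun i => h i.succ) j (h 0 * h j.succ))


open Equiv Function Finset

namespace FrobAux

variable {k : ℕ} {G : Type*} [Group G]

/-- Product of `h` along the forward orbit of `i` under `σ`. -/
noncomputable def oprod {k : ℕ} {M : Type*} [Monoid M] (σ : Equiv.Perm (Fin k)) (h : Fin k → M) (i : Fin k) : M :=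
  ((List.range (Function.minimalPeriod σ i)).map fun j => h ((σ ^ j) i)).prod

/-- `i` is the minimal representative of its cycle. -/
def MinRep (σ : Equiv.Perm (Fin k)) (i : Fin k) : Prop := ∀ j, σ.SameCycle i j → i ≤ j

instance (σ : Equiv.Perm (Fin k)) (i : Fin k) : Decidable (MinRep σ i) := by
  unfold MinRep; infer_instance

noncomputable def Phi (χ : G → ℂ) {k : ℕ} (σ : Equiv.Perm (Fin k)) (h : Fin k → G) : ℂ :=
  ∏ i : Fin k, if MinRep σ i then χ (oprod σ h i) else 1

lemma mem_periodicPts (σ : Equiv.Perm (Fin k)) (x : Fin k) : x ∈ periodicPts ⇑σ := by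
  refine ⟨orderOf σ, orderOf_pos σ, ?_⟩
  rw [IsPeriodicPt, IsFixedPt, Equiv.Perm.iterate_eq_pow, pow_orderOf_eq_one σ]
  rfl

lemma minPer_pos (σ : Equiv.Perm (Fin k)) (x : Fin k) : 0 < minimalPeriod ⇑σ x :=
  minimalPeriod_pos_of_mem_periodicPts (mem_periodicPts σ x)

lemma pow_minPer (σ : Equiv.Perm (Fin k)) (x : Fin k) :
    (σ ^ minimalPeriod ⇑σ x) x = x := by
  have := isPeriodicPt_minimalPeriod ⇑σ x
  rw [IsPeriodicPt, IsFixedPt, Equiv.Perm.iterate_eq_pow] at this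
  exact this

lemma sameCycle_iff_pow (σ : Equiv.Perm (Fin k)) (x y : Fin k) :
    σ.SameCycle x y ↔ ∃ n : ℕ, (σ ^ n) x = y := by
  constructor
  · intro hxy
    obtain ⟨n, _, hn⟩ := hxy.exists_pow_eq'
    exact ⟨n, hn⟩
  · rintro ⟨n, rfl⟩
    exact ⟨(n : ℤ), by simp⟩

lemma minPer_pow_apply (σ : Equiv.Perm (Fin k)) (x : Fin k) (t : ℕ) :
    minimalPeriod ⇑σ ((σ ^ t) x) = minimalPeriod ⇑σ x := by
  have := minimalPeriod_apply_iterate (mem_periodicPts σ x) t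
  rw [Equiv.Perm.iterate_eq_pow] at this
  exact this

end FrobAux

namespace FrobAux

section rot
variable {k : ℕ} {G : Type*} [Group G]
variable (χ : G → ℂ)

lemma chi_shift (htr : ∀ g h : G, χ (g * h) = χ (h * g)) (f : ℕ → G) {m : ℕ} (hm : 0 < m) (hf : ∀ j, f (j + m) = f j) (t : ℕ) :
    χ (((List.range m).map fun j => f (j + t)).prod) = χ (((List.range m).map f).prod) := by
  induction t with
  | zero => simp
  | succ t ih =>
    rw [← ih]
    obtain ⟨n, rfl⟩ := Nat.exists_eq_succ_of_ne_zero hm.ne'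
    have hA : ((List.range (n + 1)).map fun j => f (j + t)).prod
        = f t * ((List.range n).map fun j => f (j + 1 + t)).prod := by
      rw [List.range_succ_eq_map, List.map_cons, List.prod_cons, List.map_map]
      simp [Function.comp_def, Nat.succ_add, Nat.zero_add]
    have hB : ((List.range (n + 1)).map fun j => f (j + (t + 1))).prod
        = ((List.range n).map fun j => f (j + 1 + t)).prod * f t := by
      rw [List.range_succ, List.map_append, List.prod_append]
      congr 1
      · congr 1
        apply List.map_congr_left
        intro j _
        congr 1
        omega
      · have h1 : n + (t + 1) = t + (n + 1) := by omega
        simp [h1, hf t]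
    rw [hA, hB]
    exact htr _ _

lemma chi_oprod_pow (htr : ∀ g h : G, χ (g * h) = χ (h * g)) (σ : Equiv.Perm (Fin k)) (h : Fin k → G) (x : Fin k) (t : ℕ) :
    χ (oprod σ h ((σ ^ t) x)) = χ (oprod σ h x) := by
  set m := minimalPeriod ⇑σ x with hm
  set f : ℕ → G := fun j => h ((σ ^ j) x) with hfdef
  have hper : ∀ j, f (j + m) = f j := by
    intro j
    simp only [hfdef]
    congr 1
    rw [pow_add, Equiv.Perm.mul_apply, pow_minPer]
  have h1 : oprod σ h ((σ ^ t) x) = ((List.range m).map fun j => f (j + t)).prod := by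
    unfold oprod
    rw [minPer_pow_apply, ← hm]
    congr 1
    apply List.map_congr_left
    intro j _
    simp only [hfdef]
    congr 1
    rw [← Equiv.Perm.mul_apply, ← pow_add]
  rw [h1, chi_shift χ htr f (minPer_pos σ x) hper t]
  rfl

lemma chi_oprod_sameCycle (htr : ∀ g h : G, χ (g * h) = χ (h * g)) (σ : Equiv.Perm (Fin k)) (h : Fin k → G) {x y : Fin k}
    (hxy : σ.SameCycle x y) : χ (oprod σ h y) = χ (oprod σ h x) := by
  obtain ⟨t, rfl⟩ := (sameCycle_iff_pow σ x y).mp hxy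
  exact chi_oprod_pow χ htr σ h x t

end rot

lemma oprod_fixed {k : ℕ} {G : Type*} [Group G] {σ : Equiv.Perm (Fin k)} (h : Fin k → G)
    {x : Fin k} (hx : σ x = x) : oprod σ h x = h x := by
  unfold oprod
  rw [minimalPeriod_eq_one_iff_isFixedPt.mpr hx]
  simp [List.range_succ]

lemma oprod_congr {k : ℕ} {G : Type*} [Group G] {σ : Equiv.Perm (Fin k)} {h₁ h₂ : Fin k → G}
    {x : Fin k} (hh : ∀ y, σ.SameCycle x y → h₁ y = h₂ y) : oprod σ h₁ x = oprod σ h₂ x := by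
  unfold oprod
  congr 1
  apply List.map_congr_left
  intro j _
  exact hh _ ⟨(j : ℤ), by simp⟩

lemma sameCycle_fixed {k : ℕ} {σ : Equiv.Perm (Fin k)} {x : Fin k} (hx : σ x = x) {y : Fin k} :
    σ.SameCycle x y ↔ y = x := by
  constructor
  · rintro ⟨n, rfl⟩
    exact Equiv.Perm.zpow_apply_eq_self_of_apply_eq_self hx n
  · rintro rfl
    exact ⟨0, by simp⟩

end FrobAux

namespace FrobAux

section decomp
variable {k : ℕ} {G : Type*} [Group G]

lemma succ_minPer {τ : Equiv.Perm (Fin (k + 1))} {e : Equiv.Perm (Fin k)} {i : Fin k}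
    (H : ∀ n : ℕ, (τ ^ n) i.succ = ((e ^ n) i).succ) :
    minimalPeriod ⇑τ i.succ = minimalPeriod ⇑e i := by
  rw [minimalPeriod_eq_minimalPeriod_iff]
  intro n
  simp only [IsPeriodicPt, IsFixedPt, Equiv.Perm.iterate_eq_pow]
  rw [H n]
  exact ⟨fun hh => Fin.succ_injective _ hh, fun hh => by rw [hh]⟩

lemma succ_oprod {τ : Equiv.Perm (Fin (k + 1))} {e : Equiv.Perm (Fin k)} {i : Fin k}
    (H : ∀ n : ℕ, (τ ^ n) i.succ = ((e ^ n) i).succ) (h : Fin (k + 1) → G) :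
    oprod τ h i.succ = oprod e (fun j => h j.succ) i := by
  unfold oprod
  rw [succ_minPer H]
  congr 1
  apply List.map_congr_left
  intro j _
  rw [H j]

lemma succ_sameCycle {τ : Equiv.Perm (Fin (k + 1))} {e : Equiv.Perm (Fin k)} {i : Fin k}
    (H : ∀ n : ℕ, (τ ^ n) i.succ = ((e ^ n) i).succ) (y : Fin (k + 1)) :
    τ.SameCycle i.succ y ↔ ∃ j : Fin k, y = j.succ ∧ e.SameCycle i j := by
  rw [sameCycle_iff_pow]
  constructor
  · rintro ⟨n, rfl⟩
    exact ⟨(e ^ n) i, H n, ⟨(n : ℤ), by simp⟩⟩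
  · rintro ⟨j, rfl, hij⟩
    obtain ⟨n, rfl⟩ := (sameCycle_iff_pow e i j).mp hij
    exact ⟨n, H n⟩

lemma succ_minRep {τ : Equiv.Perm (Fin (k + 1))} {e : Equiv.Perm (Fin k)} {i : Fin k}
    (H : ∀ n : ℕ, (τ ^ n) i.succ = ((e ^ n) i).succ) :
    MinRep τ i.succ ↔ MinRep e i := by
  constructor
  · intro hm j hij
    exact Fin.succ_le_succ_iff.mp (hm j.succ ((succ_sameCycle H _).mpr ⟨j, rfl, hij⟩))
  · intro hm y hy
    obtain ⟨j, rfl, hij⟩ := (succ_sameCycle H _).mp hy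
    exact Fin.succ_le_succ_iff.mpr (hm j hij)

lemma tau0_succ (e : Equiv.Perm (Fin k)) (i : Fin k) :
    (Equiv.Perm.decomposeFin.symm (0, e)) i.succ = (e i).succ := by
  rw [Equiv.Perm.decomposeFin_symm_apply_succ]
  simp

lemma tau0_pow (e : Equiv.Perm (Fin k)) (i : Fin k) (n : ℕ) :
    ((Equiv.Perm.decomposeFin.symm (0, e)) ^ n) i.succ = ((e ^ n) i).succ := by
  induction n generalizing i with
  | zero => simp
  | succ n ih =>
    rw [pow_succ, Equiv.Perm.mul_apply, tau0_succ, ih (e i), pow_succ, Equiv.Perm.mul_apply]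

lemma tauq_succ (e : Equiv.Perm (Fin k)) (q : Fin k) (i : Fin k) :
    (Equiv.Perm.decomposeFin.symm (q.succ, e)) i.succ
      = if e i = q then 0 else (e i).succ := by
  rw [Equiv.Perm.decomposeFin_symm_apply_succ]
  by_cases hiq : e i = q
  · rw [if_pos hiq, hiq, Equiv.swap_apply_right]
  · rw [if_neg hiq, Equiv.swap_apply_of_ne_of_ne (Fin.succ_ne_zero _)
      (fun hc => hiq (Fin.succ_injective _ hc))]

end decomp

end FrobAux

namespace FrobAux

section tauq
variable {k : ℕ} {G : Type*} [Group G] (e : Equiv.Perm (Fin k)) (q : Fin k)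

lemma tauq_pow_zero : ∀ j, j < minimalPeriod ⇑e q →
    ((Equiv.Perm.decomposeFin.symm (q.succ, e)) ^ (j + 1)) 0 = ((e ^ j) q).succ := by
  intro j
  induction j with
  | zero =>
    intro _
    simp [Equiv.Perm.decomposeFin_symm_apply_zero]
  | succ j ih =>
    intro hj
    rw [pow_succ', Equiv.Perm.mul_apply, ih (by omega), tauq_succ]
    have hne : e ((e ^ j) q) ≠ q := by
      intro hc
      have hper : ((e ^ (j + 1)) q) = q := by
        rw [pow_succ', Equiv.Perm.mul_apply, hc]
      have hdvd : minimalPeriod ⇑e q ∣ j + 1 := by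
        apply IsPeriodicPt.minimalPeriod_dvd
        rw [IsPeriodicPt, IsFixedPt, Equiv.Perm.iterate_eq_pow, hper]
      have := Nat.le_of_dvd (by omega) hdvd
      omega
    rw [if_neg hne, pow_succ', Equiv.Perm.mul_apply]

lemma tauq_pow_zero_self :
    ((Equiv.Perm.decomposeFin.symm (q.succ, e)) ^ (minimalPeriod ⇑e q + 1)) 0 = 0 := by
  obtain ⟨n, hn⟩ : ∃ n, minimalPeriod ⇑e q = n + 1 := ⟨minimalPeriod ⇑e q - 1, by have := minPer_pos e q; omega⟩
  rw [hn, pow_succ', Equiv.Perm.mul_apply,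
    show ((Equiv.Perm.decomposeFin.symm (q.succ, e)) ^ (n + 1)) 0 = ((e ^ n) q).succ from
      tauq_pow_zero e q n (by omega), tauq_succ]
  have hq : e ((e ^ n) q) = q := by
    have h2 : (e ^ (n + 1)) q = q := by rw [← hn]; exact pow_minPer e q
    rw [pow_succ', Equiv.Perm.mul_apply] at h2
    exact h2
  rw [if_pos hq]

lemma tauq_minPer_zero :
    minimalPeriod (⇑(Equiv.Perm.decomposeFin.symm (q.succ, e))) 0 = minimalPeriod ⇑e q + 1 := by
  have hp : IsPeriodicPt (⇑(Equiv.Perm.decomposeFin.symm (q.succ, e)))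
      (minimalPeriod ⇑e q + 1) 0 := by
    rw [IsPeriodicPt, IsFixedPt, Equiv.Perm.iterate_eq_pow]
    exact tauq_pow_zero_self e q
  have hle := hp.minimalPeriod_le (by omega)
  have hpos := minPer_pos (Equiv.Perm.decomposeFin.symm (q.succ, e)) 0
  by_contra hne
  obtain ⟨j, hj⟩ : ∃ j, minimalPeriod (⇑(Equiv.Perm.decomposeFin.symm (q.succ, e))) 0 = j + 1 :=
    ⟨minimalPeriod (⇑(Equiv.Perm.decomposeFin.symm (q.succ, e))) 0 - 1, by omega⟩
  have hx := pow_minPer (Equiv.Perm.decomposeFin.symm (q.succ, e)) 0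
  rw [hj] at hx
  rw [tauq_pow_zero e q j (by omega)] at hx
  exact Fin.succ_ne_zero _ hx

lemma tauq_oprod (h : Fin (k + 1) → G) :
    oprod (Equiv.Perm.decomposeFin.symm (q.succ, e)) h 0
      = h 0 * oprod e (fun j => h j.succ) q := by
  unfold oprod
  rw [tauq_minPer_zero, List.range_succ_eq_map, List.map_cons, List.prod_cons, List.map_map]
  congr 1
  congr 1
  apply List.map_congr_left
  intro j hj
  have hjm : j < minimalPeriod ⇑e q := List.mem_range.mp hj
  simp only [Function.comp_apply]
  rw [tauq_pow_zero e q j hjm]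

lemma tauq_sameCycle_zero (y : Fin (k + 1)) :
    Equiv.Perm.SameCycle (Equiv.Perm.decomposeFin.symm (q.succ, e)) 0 y
      ↔ y = 0 ∨ ∃ j : Fin k, y = j.succ ∧ e.SameCycle q j := by
  constructor
  · intro hy
    obtain ⟨n, rfl⟩ := (sameCycle_iff_pow _ _ _).mp hy
    have hmod : ((Equiv.Perm.decomposeFin.symm (q.succ, e)) ^ (n % (minimalPeriod ⇑e q + 1))) 0
        = ((Equiv.Perm.decomposeFin.symm (q.succ, e)) ^ n) 0 := by
      have h5 := iterate_mod_minimalPeriod_eq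
        (f := ⇑(Equiv.Perm.decomposeFin.symm (q.succ, e))) (x := 0) (n := n)
      rw [tauq_minPer_zero] at h5
      simpa [Equiv.Perm.iterate_eq_pow] using h5
    rw [← hmod]
    rcases Nat.eq_zero_or_pos (n % (minimalPeriod ⇑e q + 1)) with h0 | hpos
    · left; rw [h0]; simp
    · right
      obtain ⟨j, hj⟩ : ∃ j, n % (minimalPeriod ⇑e q + 1) = j + 1 :=
        ⟨n % (minimalPeriod ⇑e q + 1) - 1, by omega⟩
      have hjm : j < minimalPeriod ⇑e q := by
        have := Nat.mod_lt n (y := minimalPeriod ⇑e q + 1) (by omega)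
        omega
      rw [hj, tauq_pow_zero e q j hjm]
      exact ⟨(e ^ j) q, rfl, ⟨(j : ℤ), by simp⟩⟩
  · rintro (rfl | ⟨j, rfl, hqj⟩)
    · exact ⟨0, by simp⟩
    · obtain ⟨t, rfl⟩ := (sameCycle_iff_pow e q j).mp hqj
      have hmod : (e ^ (t % minimalPeriod ⇑e q)) q = (e ^ t) q := by
        have h5 := iterate_mod_minimalPeriod_eq (f := ⇑e) (x := q) (n := t)
        simp only [Equiv.Perm.iterate_eq_pow] at h5
        exact h5
      apply (sameCycle_iff_pow _ _ _).mpr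
      refine ⟨t % minimalPeriod ⇑e q + 1, ?_⟩
      rw [tauq_pow_zero e q _ (Nat.mod_lt _ (minPer_pos e q)), hmod]

lemma tauq_pow_succ {i : Fin k} (hi : ¬ e.SameCycle q i) (n : ℕ) :
    ((Equiv.Perm.decomposeFin.symm (q.succ, e)) ^ n) i.succ = ((e ^ n) i).succ := by
  induction n with
  | zero => simp
  | succ n ih =>
    rw [pow_succ', Equiv.Perm.mul_apply, ih, tauq_succ]
    have hne : e ((e ^ n) i) ≠ q := by
      intro hc
      apply hi
      have : (e ^ (n + 1)) i = q := by rw [pow_succ', Equiv.Perm.mul_apply, hc]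
      exact Equiv.Perm.SameCycle.symm ⟨((n + 1 : ℕ) : ℤ), by rw [zpow_natCast]; exact this⟩
    rw [if_neg hne, pow_succ', Equiv.Perm.mul_apply]

end tauq

end FrobAux

namespace FrobAux

section phi
variable {k : ℕ} {G : Type*} [Group G] (χ : G → ℂ)

lemma minRep_zero (τ : Equiv.Perm (Fin (k + 1))) : MinRep τ 0 := fun j _ => Fin.zero_le j

lemma Phi_zero (e : Equiv.Perm (Fin k)) (h : Fin (k + 1) → G) :
    Phi χ (Equiv.Perm.decomposeFin.symm (0, e)) h = χ (h 0) * Phi χ e (fun j => h j.succ) := by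
  unfold Phi
  rw [Fin.prod_univ_succ]
  congr 1
  · rw [if_pos (minRep_zero _), oprod_fixed h (Equiv.Perm.decomposeFin_symm_apply_zero 0 e)]
  · apply Finset.prod_congr rfl
    intro i _
    exact if_congr (succ_minRep (tau0_pow e i)) (by rw [succ_oprod (tau0_pow e i) h]) rfl

lemma Phi_succ (e : Equiv.Perm (Fin k)) (q : Fin k) (h : Fin (k + 1) → G) :
    Phi χ (Equiv.Perm.decomposeFin.symm (q.succ, e)) h
      = χ (h 0 * oprod e (fun j => h j.succ) q) *
        ∏ i : Fin k, if MinRep e i ∧ ¬ e.SameCycle q i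
          then χ (oprod e (fun j => h j.succ) i) else 1 := by
  unfold Phi
  rw [Fin.prod_univ_succ]
  congr 1
  · rw [if_pos (minRep_zero _), tauq_oprod e q h]
  · apply Finset.prod_congr rfl
    intro i _
    by_cases hqi : e.SameCycle q i
    · have h1 : ¬ MinRep (Equiv.Perm.decomposeFin.symm (q.succ, e)) i.succ := by
        intro hm
        have h0 : (Equiv.Perm.decomposeFin.symm (q.succ, e)).SameCycle i.succ 0 :=
          Equiv.Perm.SameCycle.symm
            ((tauq_sameCycle_zero e q i.succ).mpr (Or.inr ⟨i, rfl, hqi⟩))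
        exact absurd (Fin.le_zero_iff.mp (hm 0 h0)) (Fin.succ_ne_zero i)
      have h2 : ¬ (MinRep e i ∧ ¬ e.SameCycle q i) := fun hx => hx.2 hqi
      rw [if_neg h1, if_neg h2]
    · have hiff : MinRep (Equiv.Perm.decomposeFin.symm (q.succ, e)) i.succ
          ↔ (MinRep e i ∧ ¬ e.SameCycle q i) := by
        rw [succ_minRep (tauq_pow_succ e q hqi)]
        exact (and_iff_left hqi).symm
      exact if_congr hiff (by rw [succ_oprod (tauq_pow_succ e q hqi) h]) rfl

lemma oprod_head (σ : Equiv.Perm (Fin k)) (h : Fin k → G) (x : Fin k) :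
    oprod σ h x = h x *
      ((List.range (minimalPeriod ⇑σ x - 1)).map fun j => h ((σ ^ (j + 1)) x)).prod := by
  unfold oprod
  obtain ⟨n, hn⟩ : ∃ n, minimalPeriod ⇑σ x = n + 1 :=
    ⟨minimalPeriod ⇑σ x - 1, by have := minPer_pos σ x; omega⟩
  rw [hn, List.range_succ_eq_map, List.map_cons, List.prod_cons, List.map_map,
    show n + 1 - 1 = n from rfl]
  simp only [pow_zero, Equiv.Perm.coe_one, id_eq]
  rfl

lemma oprod_update (e : Equiv.Perm (Fin k)) (q : Fin k) (h0 : G) (th : Fin k → G) :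
    oprod e (Function.update th q (h0 * th q)) q = h0 * oprod e th q := by
  rw [oprod_head e _ q, oprod_head e th q, Function.update_self]
  have hmap : ((List.range (minimalPeriod ⇑e q - 1)).map
        fun j => Function.update th q (h0 * th q) ((e ^ (j + 1)) q))
      = ((List.range (minimalPeriod ⇑e q - 1)).map fun j => th ((e ^ (j + 1)) q)) := by
    apply List.map_congr_left
    intro j hj
    have hjm : j < minimalPeriod ⇑e q - 1 := List.mem_range.mp hj
    have hne : (e ^ (j + 1)) q ≠ q := by
      intro hc
      have hdvd : minimalPeriod ⇑e q ∣ j + 1 := IsPeriodicPt.minimalPeriod_dvd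
        (by rw [IsPeriodicPt, IsFixedPt, Equiv.Perm.iterate_eq_pow, hc])
      have hpos := minPer_pos e q
      have := Nat.le_of_dvd (by omega) hdvd
      omega
    rw [Function.update_of_ne hne]
  rw [hmap, mul_assoc]

lemma Phi_update (htr : ∀ g h : G, χ (g * h) = χ (h * g)) (e : Equiv.Perm (Fin k)) (q : Fin k)
    (h0 : G) (th : Fin k → G) :
    Phi χ e (Function.update th q (h0 * th q))
      = χ (h0 * oprod e th q) *
        ∏ i : Fin k, if MinRep e i ∧ ¬ e.SameCycle q i then χ (oprod e th i) else 1 := by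
  set h'' := Function.update th q (h0 * th q) with hh
  have hqO : q ∈ Finset.univ.filter (fun j => e.SameCycle q j) :=
    Finset.mem_filter.mpr ⟨Finset.mem_univ _, ⟨0, by simp⟩⟩
  set O := Finset.univ.filter (fun j => e.SameCycle q j) with hO
  have hne : O.Nonempty := ⟨q, hqO⟩
  set r := O.min' hne with hr
  have hqr : e.SameCycle q r := (Finset.mem_filter.mp (O.min'_mem hne)).2
  have hrmin : MinRep e r := by
    intro j hj
    exact Finset.min'_le O j (Finset.mem_filter.mpr ⟨Finset.mem_univ _, hqr.trans hj⟩)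
  unfold Phi
  have hsplit : ∀ i : Fin k, (if MinRep e i then χ (oprod e h'' i) else 1)
      = (if MinRep e i ∧ e.SameCycle q i then χ (oprod e h'' i) else 1)
        * (if MinRep e i ∧ ¬ e.SameCycle q i then χ (oprod e th i) else 1) := by
    intro i
    by_cases hm : MinRep e i
    · by_cases hc : e.SameCycle q i
      · rw [if_pos hm, if_pos (show MinRep e i ∧ e.SameCycle q i from ⟨hm, hc⟩),
          if_neg (show ¬(MinRep e i ∧ ¬ e.SameCycle q i) from fun hx => hx.2 hc), mul_one]
      · rw [if_pos hm, if_neg (show ¬(MinRep e i ∧ e.SameCycle q i) from fun hx => hc hx.2),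
          if_pos (show MinRep e i ∧ ¬ e.SameCycle q i from ⟨hm, hc⟩), one_mul]
        congr 1
        apply oprod_congr
        intro y hy
        have hyq : y ≠ q := by rintro rfl; exact hc hy.symm
        rw [hh, Function.update_of_ne hyq]
    · simp [hm]
  rw [Finset.prod_congr rfl (fun i _ => hsplit i), Finset.prod_mul_distrib]
  congr 1
  rw [Finset.prod_eq_single r]
  · rw [if_pos ⟨hrmin, hqr⟩]
    rw [chi_oprod_sameCycle χ htr e h'' hqr, hh, oprod_update e q h0 th]
  · intro b _ hbr
    apply if_neg
    rintro ⟨hbm, hbc⟩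
    apply hbr
    exact le_antisymm (hbm r (hbc.symm.trans hqr)) (hrmin b (hqr.symm.trans hbc))
  · intro hr'
    exact absurd (Finset.mem_univ r) hr'

end phi

end FrobAux

namespace FrobAux

section sums
variable {k : ℕ} {G : Type*} [Group G] (χ : G → ℂ)

noncomputable def S (χ : G → ℂ) (k : ℕ) (h : Fin k → G) : ℂ :=
  ∑ σ : Equiv.Perm (Fin k), ((Equiv.Perm.sign σ : ℤ) : ℂ) * Phi χ σ h

lemma S_succ (htr : ∀ g h : G, χ (g * h) = χ (h * g)) (h : Fin (k + 1) → G) :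
    S χ (k + 1) h = χ (h 0) * S χ k (fun i => h i.succ)
      - ∑ q : Fin k, S χ k (Function.update (fun i => h i.succ) q (h 0 * h q.succ)) := by
  unfold S
  rw [← Equiv.sum_comp (Equiv.Perm.decomposeFin.symm)
    (fun σ => ((Equiv.Perm.sign σ : ℤ) : ℂ) * Phi χ σ h), Fintype.sum_prod_type,
    Fin.sum_univ_succ]
  have hzero : ∑ e : Equiv.Perm (Fin k),
      ((Equiv.Perm.sign (Equiv.Perm.decomposeFin.symm ((0 : Fin (k + 1)), e)) : ℤ) : ℂ) *
        Phi χ (Equiv.Perm.decomposeFin.symm (0, e)) h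
      = χ (h 0) * (∑ e : Equiv.Perm (Fin k), ((Equiv.Perm.sign e : ℤ) : ℂ) *
          Phi χ e (fun i => h i.succ)) := by
    rw [Finset.mul_sum]
    apply Finset.sum_congr rfl
    intro e _
    rw [Equiv.Perm.decomposeFin.symm_sign, Phi_zero χ e h]
    simp only [if_pos rfl, one_mul]
    push_cast
    ring
  have hsucc : ∀ q : Fin k, ∑ e : Equiv.Perm (Fin k),
      ((Equiv.Perm.sign (Equiv.Perm.decomposeFin.symm (q.succ, e)) : ℤ) : ℂ) *
        Phi χ (Equiv.Perm.decomposeFin.symm (q.succ, e)) h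
      = - S χ k (Function.update (fun i => h i.succ) q (h 0 * h q.succ)) := by
    intro q
    unfold S
    rw [← Finset.sum_neg_distrib]
    apply Finset.sum_congr rfl
    intro e _
    rw [Equiv.Perm.decomposeFin.symm_sign, Phi_succ χ e q h]
    have hupd : Phi χ e (Function.update (fun i => h i.succ) q (h 0 * h q.succ))
        = χ (h 0 * oprod e (fun j => h j.succ) q) *
          ∏ i : Fin k, if MinRep e i ∧ ¬ e.SameCycle q i
            then χ (oprod e (fun j => h j.succ) i) else 1 :=
      Phi_update χ htr e q (h 0) (fun i => h i.succ)
    rw [hupd, if_neg (Fin.succ_ne_zero q)]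
    simp only [Units.val_mul, Units.val_neg, Units.val_one]
    push_cast
    ring
  rw [hzero, Finset.sum_congr rfl (fun q _ => hsucc q), Finset.sum_neg_distrib]
  rw [← sub_eq_add_neg]
  rfl

lemma frobRec_eq_S (htr : ∀ g h : G, χ (g * h) = χ (h * g)) :
    ∀ (k : ℕ) (h : Fin k → G), frobRec χ k h = S χ k h := by
  intro k
  induction k with
  | zero =>
    intro h
    have huniv : (Finset.univ : Finset (Equiv.Perm (Fin 0))) = {1} := by
      ext σ
      simp only [Finset.mem_univ, Finset.mem_singleton, true_iff]
      exact Equiv.ext fun i => i.elim0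
    show (1 : ℂ) = S χ 0 h
    unfold S
    rw [huniv, Finset.sum_singleton]
    unfold Phi
    simp
  | succ k ih =>
    intro h
    show χ (h 0) * frobRec χ k (fun i => h i.succ) -
        ∑ j : Fin k, frobRec χ k (Function.update (fun i => h i.succ) j (h 0 * h j.succ))
      = S χ (k + 1) h
    rw [S_succ χ htr h, ih, Finset.sum_congr rfl (fun j _ => ih _)]

end sums

end FrobAux

namespace FrobAux

section bridge
variable {k : ℕ} {G : Type*} [Group G] (χ : G → ℂ)

lemma card_support_cycleOf' {σ : Equiv.Perm (Fin k)} {x : Fin k} (hx : σ x ≠ x) :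
    (σ.cycleOf x).support.card = minimalPeriod ⇑σ x := by
  have hxs : x ∈ σ.support := Equiv.Perm.mem_support.mpr hx
  have hc : (σ.cycleOf x).IsCycle := Equiv.Perm.isCycle_cycleOf σ hx
  have hxc : x ∈ (σ.cycleOf x).support :=
    Equiv.Perm.mem_support_cycleOf_iff.mpr ⟨Equiv.Perm.SameCycle.refl σ x, hxs⟩
  have h1 : orderOf (σ.cycleOf x) = (σ.cycleOf x).support.card := hc.orderOf
  have h2 : minimalPeriod ⇑σ x = minimalPeriod ⇑(σ.cycleOf x) x := by
    rw [minimalPeriod_eq_minimalPeriod_iff]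
    intro n
    simp only [IsPeriodicPt, IsFixedPt, Equiv.Perm.iterate_eq_pow]
    rw [Equiv.Perm.cycleOf_pow_apply_self]
  have hfix : (σ.cycleOf x) x ≠ x := by
    rw [Equiv.Perm.cycleOf_apply_self]
    exact hx
  have h3 : minimalPeriod ⇑(σ.cycleOf x) x = orderOf (σ.cycleOf x) := by
    apply Nat.dvd_antisymm
    · apply IsPeriodicPt.minimalPeriod_dvd
      rw [IsPeriodicPt, IsFixedPt, Equiv.Perm.iterate_eq_pow, pow_orderOf_eq_one]
      simp
    · apply orderOf_dvd_of_pow_eq_one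
      apply (hc.pow_eq_one_iff' hfix).mpr
      exact pow_minPer (σ.cycleOf x) x
  rw [h2, h3, h1]

lemma cycleProd_cycleOf {σ : Equiv.Perm (Fin k)} {x : Fin k} (hx : σ x ≠ x) (hmin : MinRep σ x)
    (h : Fin k → G) : cycleProd h (σ.cycleOf x) = oprod σ h x := by
  have hxs : x ∈ σ.support := Equiv.Perm.mem_support.mpr hx
  have hxc : x ∈ (σ.cycleOf x).support :=
    Equiv.Perm.mem_support_cycleOf_iff.mpr ⟨Equiv.Perm.SameCycle.refl σ x, hxs⟩
  have hne : (σ.cycleOf x).support.Nonempty := ⟨x, hxc⟩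
  have hmin' : (σ.cycleOf x).support.min' hne = x := by
    apply le_antisymm (Finset.min'_le _ _ hxc)
    apply Finset.le_min'
    intro y hy
    exact hmin y (Equiv.Perm.mem_support_cycleOf_iff.mp hy).1
  unfold cycleProd
  rw [dif_pos hne, hmin', card_support_cycleOf' hx]
  unfold oprod
  congr 1
  apply List.map_congr_left
  intro j _
  rw [Equiv.Perm.cycleOf_pow_apply_self]

lemma Phi_eq (σ : Equiv.Perm (Fin k)) (h : Fin k → G) :
    (∏ c ∈ σ.cycleFactorsFinset, χ (cycleProd h c)) *
      (∏ i ∈ Finset.univ.filter fun i => σ i = i, χ (h i)) = Phi χ σ h := by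
  unfold Phi
  have hsplit : ∀ i : Fin k, (if MinRep σ i then χ (oprod σ h i) else 1)
      = (if MinRep σ i ∧ σ i ≠ i then χ (oprod σ h i) else 1)
        * (if σ i = i then χ (h i) else 1) := by
    intro i
    by_cases hf : σ i = i
    · have hm : MinRep σ i := by
        intro j hj
        rw [(sameCycle_fixed hf).mp hj]
      rw [if_pos hm, if_neg (show ¬(MinRep σ i ∧ σ i ≠ i) from fun hc => hc.2 hf),
        if_pos hf, one_mul, oprod_fixed h hf]
    · rw [if_neg hf, mul_one]
      by_cases hm : MinRep σ i
      · rw [if_pos hm, if_pos (show MinRep σ i ∧ σ i ≠ i from ⟨hm, hf⟩)]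
      · rw [if_neg hm, if_neg (show ¬(MinRep σ i ∧ σ i ≠ i) from fun hc => hm hc.1)]
  rw [Finset.prod_congr rfl (fun i _ => hsplit i), Finset.prod_mul_distrib]
  congr 1
  · rw [← Finset.prod_filter]
    symm
    apply Finset.prod_bij (fun a _ => σ.cycleOf a)
    · intro a ha
      have ha' := Finset.mem_filter.mp ha
      exact Equiv.Perm.cycleOf_mem_cycleFactorsFinset_iff.mpr
        (Equiv.Perm.mem_support.mpr ha'.2.2)
    · intro a ha b hb hab
      have ha' := Finset.mem_filter.mp ha
      have hb' := Finset.mem_filter.mp hb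
      have hbs : b ∈ σ.support := Equiv.Perm.mem_support.mpr hb'.2.2
      have hbc : b ∈ (σ.cycleOf a).support := by
        rw [hab]
        exact Equiv.Perm.mem_support_cycleOf_iff.mpr ⟨Equiv.Perm.SameCycle.refl σ b, hbs⟩
      have hsc : σ.SameCycle a b := (Equiv.Perm.mem_support_cycleOf_iff.mp hbc).1
      exact le_antisymm (ha'.2.1 b hsc) (hb'.2.1 a hsc.symm)
    · intro c hc
      have hcyc : c.IsCycle := (Equiv.Perm.mem_cycleFactorsFinset_iff.mp hc).1
      have hcs : c.support.Nonempty := by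
        rw [← Finset.card_pos]
        have := hcyc.two_le_card_support
        omega
      set r := c.support.min' hcs with hrdef
      have hrc : r ∈ c.support := c.support.min'_mem hcs
      have hcr : c = σ.cycleOf r := Equiv.Perm.cycle_is_cycleOf hrc hc
      have hrs : r ∈ σ.support := Equiv.Perm.mem_cycleFactorsFinset_support_le hc hrc
      have hrmin : MinRep σ r := by
        intro j hj
        apply Finset.min'_le
        rw [hcr]
        exact Equiv.Perm.mem_support_cycleOf_iff.mpr ⟨hj, hrs⟩
      refine ⟨r, Finset.mem_filter.mpr ⟨Finset.mem_univ _, hrmin,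
        Equiv.Perm.mem_support.mp hrs⟩, hcr.symm⟩
    · intro a ha
      have ha' := Finset.mem_filter.mp ha
      rw [cycleProd_cycleOf ha'.2.2 ha'.2.1 h]
  · rw [← Finset.prod_filter]

lemma frobChar_eq_S (h : Fin k → G) : frobChar χ k h = S χ k h := by
  unfold frobChar S
  apply Finset.sum_congr rfl
  intro σ _
  rw [Phi_eq χ σ h]

end bridge

end FrobAux

/-- **Frobenius's cyclic formula for the `k`-characters.** For a trace-like function
`χ : G → ℂ` on a group `G`, the recursively defined `k`-characters coincide with
the cyclic-sum formula `χ_k(h₁,…,h_k) = Σ_{σ ∈ S_k} sign(σ) ∏_j χ_{γ_j}(h₁,…,h_k)`. -/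
theorem frobRec_eq_frobChar {G : Type*} [Group G] (χ : G → ℂ)
    (htr : ∀ g h : G, χ (g * h) = χ (h * g)) (k : ℕ) (hk : 1 ≤ k) (h : Fin k → G) :
    frobRec χ k h = frobChar χ k h := by
  rw [FrobAux.frobRec_eq_S χ htr k h, FrobAux.frobChar_eq_S χ h]
end

section
/- Let G be a group and χ: G → ℂ a trace-like function, i.e. χ(gh) = χ(hg) for all g, h ∈ G. Then the Frobenius k-character χ_k is a symmetric function of its k arguments: for every permutation π ∈ S_k and all h₁, …, h_k ∈ G, χ_k(h_{π(1)}, …, h_{π(k)}) = χ_k(h₁, …, h_k). -/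
/-- trace-like functions are invariant under rotating a list product. -/
lemma chi_rotate {G : Type*} [Group G] (χ : G → ℂ)
    (htr : ∀ g h : G, χ (g * h) = χ (h * g)) (l : List G) (n : ℕ) :
    χ ((l.rotate n).prod) = χ l.prod := by
  rw [List.rotate_eq_drop_append_take_mod, List.prod_append, htr, ← List.prod_append,
    List.take_append_drop]

/-- For a cycle `c` and two points of its support, the `χ`-value of the product of
`h` along the cycle is the same whether we start at `b` or at `b'`. -/
lemma chi_cycle_start {k : ℕ} {G : Type*} [Group G] (χ : G → ℂ)
    (htr : ∀ g h : G, χ (g * h) = χ (h * g)) (f : Fin k → G) (c : Equiv.Perm (Fin k))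
    (hc : c.IsCycle) {b b' : Fin k} (hb : b ∈ c.support) (hb' : b' ∈ c.support) :
    χ ((List.range c.support.card).map fun j => f ((c ^ j) b')).prod
      = χ ((List.range c.support.card).map fun j => f ((c ^ j) b)).prod := by
  obtain ⟨n, hn⟩ := hc.exists_pow_eq (Equiv.Perm.mem_support.mp hb)
    (Equiv.Perm.mem_support.mp hb')
  set m := c.support.card with hm
  have hmpos : 0 < m := Finset.card_pos.mpr ⟨b, hb⟩
  have horder : orderOf c = m := hc.orderOf
  have hlist : ((List.range m).map fun j => f ((c ^ j) b'))
      = ((List.range m).map fun j => f ((c ^ j) b)).rotate n := by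
    apply List.ext_getElem
    · simp
    · intro i h1 h2
      simp only [List.getElem_rotate, List.length_map, List.length_range,
        List.getElem_map, List.getElem_range]
      have hlen : ((List.range m).map fun j => f ((c ^ j) b)).length = m := by simp
      have him : (i + n) % m < m := Nat.mod_lt _ hmpos
      have : (c ^ ((i + n) % m)) b = (c ^ (i + n)) b := by
        conv_rhs => rw [← Nat.mod_add_div (i + n) m]
        rw [pow_add, pow_mul, ← horder, pow_orderOf_eq_one, one_pow, mul_one]
      rw [this, pow_add, Equiv.Perm.mul_apply, hn]
  rw [hlist, chi_rotate χ htr]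

lemma chi_cycleProd_conj {k : ℕ} {G : Type*} [Group G] (χ : G → ℂ)
    (htr : ∀ g h : G, χ (g * h) = χ (h * g)) (h : Fin k → G) (π c : Equiv.Perm (Fin k))
    (hc : c.IsCycle) :
    χ (cycleProd (h ∘ π) c) = χ (cycleProd h (π * c * π⁻¹)) := by
  set d := π * c * π⁻¹ with hd
  have hsupp : d.support = c.support.map π.toEmbedding := Equiv.Perm.support_conj
  have hcard : d.support.card = c.support.card := by rw [hsupp, Finset.card_map]
  have hcne : c.support.Nonempty := hc.nonempty_support
  have hdne : d.support.Nonempty := by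
    rw [hsupp]; exact hcne.map
  -- the min of d.support is π b' for some b' in c.support
  set a := d.support.min' hdne with ha
  have hmem : a ∈ d.support := Finset.min'_mem _ _
  rw [hsupp, Finset.mem_map] at hmem
  obtain ⟨b', hb', hb'eq⟩ := hmem
  have hpow : ∀ j : ℕ, (d ^ j) a = π ((c ^ j) b') := by
    intro j
    rw [← hb'eq, hd, conj_pow]
    simp [Equiv.Perm.mul_apply]
  rw [cycleProd, cycleProd, dif_pos hcne, dif_pos hdne]
  have : ((List.range d.support.card).map fun j => h ((d ^ j) a))
      = (List.range c.support.card).map fun j => (h ∘ π) ((c ^ j) b') := by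
    rw [hcard]
    exact List.map_congr_left fun j _ => by rw [hpow]; rfl
  rw [this]
  exact chi_cycle_start χ htr (h ∘ π) c hc hb' (Finset.min'_mem _ _)

/-- **Symmetry of Frobenius `k`-characters.** For a trace-like function `χ : G → ℂ`
on a group `G`, the Frobenius `k`-character is a symmetric function of its `k`
arguments: `χ_k(h_{π(1)}, …, h_{π(k)}) = χ_k(h₁, …, h_k)` for every `π ∈ S_k`. -/
theorem frobChar_symmetric {G : Type*} [Group G] (χ : G → ℂ)
    (htr : ∀ g h : G, χ (g * h) = χ (h * g)) (k : ℕ)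
    (π : Equiv.Perm (Fin k)) (h : Fin k → G) :
    frobChar χ k (h ∘ π) = frobChar χ k h := by
  unfold frobChar
  refine Fintype.sum_equiv (MulAut.conj π).toEquiv _ _ fun σ => ?_
  have hτ : (MulAut.conj π).toEquiv σ = π * σ * π⁻¹ := rfl
  rw [hτ]
  congr 1
  · rw [show Equiv.Perm.sign (π * σ * π⁻¹) = Equiv.Perm.sign σ by
      simp [mul_comm, ← mul_assoc, Int.units_mul_self]]
  congr 1
  · -- cycle part
    have hfac : (π * σ * π⁻¹).cycleFactorsFinset
        = σ.cycleFactorsFinset.map (MulAut.conj π).toEquiv.toEmbedding := by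
      have := Equiv.Perm.cycleFactorsFinset_conj σ π
      simpa [ConjAct.smul_def] using this
    rw [hfac, Finset.prod_map]
    refine Finset.prod_congr rfl fun c hcmem => ?_
    have hc : c.IsCycle := (Equiv.Perm.mem_cycleFactorsFinset_iff.mp hcmem).1
    have : (MulAut.conj π).toEquiv.toEmbedding c = π * c * π⁻¹ := rfl
    rw [this]
    exact chi_cycleProd_conj χ htr h π c hc
  · -- fixed point part
    refine Finset.prod_nbij (fun i => π i) ?_ ?_ ?_ ?_
    · intro i hi
      simp only [Finset.mem_filter, Finset.mem_univ, true_and] at hi ⊢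
      simp [Equiv.Perm.mul_apply, hi]
    · intro i hi j hj hij
      exact π.injective hij
    · intro j hj
      simp only [Finset.coe_filter, Set.mem_setOf_eq, Set.mem_image] at hj ⊢
      refine ⟨π⁻¹ j, ⟨Finset.mem_univ _, ?_⟩, by simp⟩
      have := hj.2
      simp only [Equiv.Perm.mul_apply] at this
      have : σ (π⁻¹ j) = π⁻¹ j := by
        apply π.injective
        simpa [Equiv.Perm.mul_apply] using this
      exact this
    · intro i hi
      rfl
end

section
/- Let G be a group and χ⁽¹⁾, χ⁽²⁾: G → ℂ trace-like functions, and let χ = χ⁽¹⁾ + χ⁽²⁾. Then for every k ≥ 1 and all h₁, …, h_k ∈ G, the Frobenius k-characters satisfy χ_k(h₁, …, h_k) = Σ_{S ⊆ {1,…,k}} χ⁽¹⁾_{|S|}(h_S) · χ⁽²⁾_{k−|S|}(h_{Sᶜ}), where for a subset S = {i₁ < ⋯ < i_m} one writes h_S = (h_{i₁}, …, h_{i_m}), Sᶜ is the complement of S, and χ⁽ⁱ⁾₀ = 1. Equivalently, χ_k(h₁,…,h_k) = χ⁽¹⁾_k(h₁,…,h_k) + χ⁽²⁾_k(h₁,…,h_k)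 + Σ_{m=1}^{k−1} Σ_σ χ⁽¹⁾_m(h_{σ(1)},…,h_{σ(m)}) χ⁽²⁾_{k−m}(h_{σ(m+1)},…,h_{σ(k)}), where σ runs over all (m, k−m)-shuffles. -/
open Equiv Equiv.Perm Finset


section Aux
variable {α β : Type*} [DecidableEq α] [Fintype α] [DecidableEq β] [Fintype β]
  {p : β → Prop} [DecidablePred p]

lemma cycleOf_extendDomain (f : α ≃ Subtype p) (τ : Equiv.Perm α) (a : α) :
    (τ.extendDomain f).cycleOf ((f a : β)) = (τ.cycleOf a).extendDomain f := by
  ext b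
  by_cases pb : p b
  · obtain ⟨a', rfl⟩ : ∃ a', ((f a' : β)) = b := ⟨f.symm ⟨b, pb⟩, by simp⟩
    by_cases hsc : τ.SameCycle a a'
    · have hsc' : (τ.extendDomain f).SameCycle (f a : β) (f a' : β) :=
        sameCycle_extendDomain.mpr hsc
      rw [hsc'.cycleOf_apply, extendDomain_apply_image, extendDomain_apply_image,
        hsc.cycleOf_apply]
    · have hsc' : ¬ (τ.extendDomain f).SameCycle (f a : β) (f a' : β) := by
        rwa [sameCycle_extendDomain]
      rw [cycleOf_apply_of_not_sameCycle hsc', extendDomain_apply_image,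
        cycleOf_apply_of_not_sameCycle hsc]
  · rw [cycleOf_apply, extendDomain_apply_not_subtype _ _ pb,
      extendDomain_apply_not_subtype _ _ pb, ite_self]

lemma cycleFactorsFinset_extendDomain (f : α ≃ Subtype p) (τ : Equiv.Perm α) :
    (τ.extendDomain f).cycleFactorsFinset =
      τ.cycleFactorsFinset.image (fun c => c.extendDomain f) := by
  ext c'
  constructor
  · intro hc'
    have hcyc := (mem_cycleFactorsFinset_iff.mp hc').1
    obtain ⟨x, hx⟩ := hcyc.nonempty_support
    have hx' : x ∈ (τ.extendDomain f).support := mem_cycleFactorsFinset_support_le hc' hx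
    rw [Equiv.Perm.support_extend_domain] at hx'
    obtain ⟨a, ha, rfl⟩ := Finset.mem_map.mp hx'
    have : c' = (τ.extendDomain f).cycleOf (f.asEmbedding a) :=
      ((eq_cycleOf_of_mem_cycleFactorsFinset_iff _ _ hc' _).mpr hx)
    rw [Finset.mem_image]
    refine ⟨τ.cycleOf a, cycleOf_mem_cycleFactorsFinset_iff.mpr ha, ?_⟩
    rw [← cycleOf_extendDomain f τ a, this]
    rfl
  · intro hc'
    obtain ⟨c, hc, rfl⟩ := Finset.mem_image.mp hc'
    rw [mem_cycleFactorsFinset_iff] at hc ⊢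
    refine ⟨hc.1.extendDomain f, ?_⟩
    intro b hb
    rw [Equiv.Perm.support_extend_domain] at hb
    obtain ⟨a, ha, rfl⟩ := Finset.mem_map.mp hb
    show (c.extendDomain f) ((f a : β)) = (τ.extendDomain f) ((f a : β))
    rw [extendDomain_apply_image, extendDomain_apply_image, hc.2 a ha]

end Aux

lemma cycleProd_extendDomain {m k : ℕ} {M : Type*} [Monoid M]
    {p : Fin k → Prop} [DecidablePred p] (f : Fin m ≃ Subtype p)
    (hf : Monotone fun i => ((f i : Fin k))) (h : Fin k → M) (c : Equiv.Perm (Fin m)) :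
    cycleProd h (c.extendDomain f) = cycleProd (fun i => h ((f i : Fin k))) c := by
  unfold cycleProd
  rw [Equiv.Perm.support_extend_domain]
  by_cases hc : c.support.Nonempty
  · have hc' : (c.support.map f.asEmbedding).Nonempty := by simpa using hc
    rw [dif_pos hc', dif_pos hc]
    congr 1
    rw [Finset.card_map]
    apply List.map_congr_left
    intro j _
    have hmin : (c.support.map f.asEmbedding).min' hc' = f.asEmbedding (c.support.min' hc) := by
      apply le_antisymm
      · exact Finset.min'_le _ _ (Finset.mem_map_of_mem _ (c.support.min'_mem hc))
      · apply Finset.le_min'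
        intro y hy
        obtain ⟨a, ha, rfl⟩ := Finset.mem_map.mp hy
        exact hf (c.support.min'_le a ha)
    rw [hmin]
    show h ((c.extendDomain f ^ j) ((f (c.support.min' hc) : Fin k))) = _
    rw [← Equiv.Perm.extendDomain_pow, extendDomain_apply_image]
  · have hc' : ¬ (c.support.map f.asEmbedding).Nonempty := by simpa using hc
    rw [dif_neg hc', dif_neg hc]


section SetEq
variable {M : Type*} [Monoid M] {k : ℕ} {σ : Equiv.Perm (Fin k)}
  {T : Finset (Equiv.Perm (Fin k))} {U : Finset (Fin k)}

lemma filterT_eq (hT : T ⊆ σ.cycleFactorsFinset)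
    (hU : U ⊆ Finset.univ.filter fun i => σ i = i) :
    σ.cycleFactorsFinset.filter
      (fun c => c.support ⊆ U ∪ T.biUnion Equiv.Perm.support) = T := by
  ext c
  simp only [Finset.mem_filter]
  constructor
  · rintro ⟨hc, hsub⟩
    obtain ⟨x, hx⟩ := (Equiv.Perm.mem_cycleFactorsFinset_iff.mp hc).1.nonempty_support
    have hxS := hsub hx
    rw [Finset.mem_union] at hxS
    rcases hxS with hxU | hxB
    · exfalso
      have hfix := (Finset.mem_filter.mp (hU hxU)).2
      have : x ∈ σ.support := Equiv.Perm.mem_cycleFactorsFinset_support_le hc hx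
      exact (Equiv.Perm.mem_support.mp this) hfix
    · obtain ⟨c', hc'T, hxc'⟩ := Finset.mem_biUnion.mp hxB
      by_contra hcT
      have hne : c ≠ c' := fun he => hcT (he ▸ hc'T)
      have hdisj := (Equiv.Perm.cycleFactorsFinset_pairwise_disjoint σ)
        hc (hT hc'T) hne
      exact (Finset.disjoint_left.mp hdisj.disjoint_support hx) hxc'
  · intro hcT
    exact ⟨hT hcT, fun x hx => Finset.mem_union_right _
      (Finset.mem_biUnion.mpr ⟨c, hcT, hx⟩)⟩

lemma filterU_eq (hT : T ⊆ σ.cycleFactorsFinset)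
    (hU : U ⊆ Finset.univ.filter fun i => σ i = i) :
    (U ∪ T.biUnion Equiv.Perm.support).filter (fun i => σ i = i) = U := by
  ext i
  simp only [Finset.mem_filter, Finset.mem_union, Finset.mem_biUnion]
  constructor
  · rintro ⟨hiU | ⟨c, hcT, hic⟩, hfix⟩
    · exact hiU
    · exfalso
      have : i ∈ σ.support := Equiv.Perm.mem_cycleFactorsFinset_support_le (hT hcT) hic
      exact (Equiv.Perm.mem_support.mp this) hfix
  · intro hiU
    exact ⟨Or.inl hiU, (Finset.mem_filter.mp (hU hiU)).2⟩

lemma filterTc_eq (hT : T ⊆ σ.cycleFactorsFinset)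
    (hU : U ⊆ Finset.univ.filter fun i => σ i = i) :
    σ.cycleFactorsFinset.filter
      (fun c => c.support ⊆ (U ∪ T.biUnion Equiv.Perm.support)ᶜ) =
      σ.cycleFactorsFinset \ T := by
  ext c
  simp only [Finset.mem_filter, Finset.mem_sdiff]
  constructor
  · rintro ⟨hc, hsub⟩
    refine ⟨hc, fun hcT => ?_⟩
    obtain ⟨x, hx⟩ := (Equiv.Perm.mem_cycleFactorsFinset_iff.mp hc).1.nonempty_support
    have h1 : x ∈ (U ∪ T.biUnion Equiv.Perm.support)ᶜ := hsub hx
    have h2 : x ∈ U ∪ T.biUnion Equiv.Perm.support :=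
      Finset.mem_union_right _ (Finset.mem_biUnion.mpr ⟨c, hcT, hx⟩)
    exact (Finset.mem_compl.mp h1) h2
  · rintro ⟨hc, hcT⟩
    refine ⟨hc, fun x hx => Finset.mem_compl.mpr ?_⟩
    rw [Finset.mem_union]
    rintro (hxU | hxB)
    · have hfix := (Finset.mem_filter.mp (hU hxU)).2
      have : x ∈ σ.support := Equiv.Perm.mem_cycleFactorsFinset_support_le hc hx
      exact (Equiv.Perm.mem_support.mp this) hfix
    · obtain ⟨c', hc'T, hxc'⟩ := Finset.mem_biUnion.mp hxB
      have hne : c ≠ c' := fun he => hcT (he ▸ hc'T)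
      have hdisj := (Equiv.Perm.cycleFactorsFinset_pairwise_disjoint σ)
        hc (hT hc'T) hne
      exact (Finset.disjoint_left.mp hdisj.disjoint_support hx) hxc'

lemma filterUc_eq (hT : T ⊆ σ.cycleFactorsFinset)
    (hU : U ⊆ Finset.univ.filter fun i => σ i = i) :
    (U ∪ T.biUnion Equiv.Perm.support)ᶜ.filter (fun i => σ i = i) =
      (Finset.univ.filter fun i => σ i = i) \ U := by
  ext i
  simp only [Finset.mem_filter, Finset.mem_sdiff, Finset.mem_compl, Finset.mem_union,
    Finset.mem_biUnion, Finset.mem_univ, true_and]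
  constructor
  · rintro ⟨hnot, hfix⟩
    exact ⟨hfix, fun hiU => hnot (Or.inl hiU)⟩
  · rintro ⟨hfix, hiU⟩
    refine ⟨?_, hfix⟩
    rintro (h1 | ⟨c, hcT, hic⟩)
    · exact hiU h1
    · have : i ∈ σ.support := Equiv.Perm.mem_cycleFactorsFinset_support_le (hT hcT) hic
      exact (Equiv.Perm.mem_support.mp this) hfix
end SetEq


section Key1
variable {M : Type*} [Monoid M] {k : ℕ}

lemma zpow_mem_of_inv {σ : Equiv.Perm (Fin k)} {S : Finset (Fin k)}
    (hS : ∀ x, x ∈ S ↔ σ x ∈ S) (n : ℤ) {x : Fin k} (hx : x ∈ S) : (σ ^ n) x ∈ S := by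
  induction n using Int.induction_on with
  | zero => simpa using hx
  | succ n ih =>
      have : (σ ^ ((n : ℤ) + 1)) x = σ ((σ ^ (n : ℤ)) x) := by
        rw [add_comm, zpow_add, zpow_one]; rfl
      rw [this]; exact (hS _).mp ih
  | pred n ih =>
      have : σ ((σ ^ (-(n : ℤ) - 1)) x) = (σ ^ (-(n : ℤ))) x := by
        rw [← Equiv.Perm.mul_apply, ← zpow_one_add]; ring_nf
      exact (hS _).mpr (by rw [this]; exact ih)

lemma apply_mem_support_iff {σ c : Equiv.Perm (Fin k)} (hc : c ∈ σ.cycleFactorsFinset)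
    (x : Fin k) : σ x ∈ c.support ↔ x ∈ c.support := by
  constructor
  · intro hx
    have h1 : c⁻¹ (σ x) ∈ c.support := by
      rw [← Equiv.Perm.support_inv] at hx ⊢; exact Equiv.Perm.apply_mem_support.mpr hx
    have h2 : σ (c⁻¹ (σ x)) = c (c⁻¹ (σ x)) := ((mem_cycleFactorsFinset_iff.mp hc).2 _ h1).symm
    rw [show c (c⁻¹ (σ x)) = σ x from c.apply_symm_apply (σ x)] at h2
    have := σ.injective h2
    rwa [← this]
  · intro hx
    rw [← (mem_cycleFactorsFinset_iff.mp hc).2 x hx]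
    exact Equiv.Perm.apply_mem_support.mpr hx

lemma support_subset_or {σ c : Equiv.Perm (Fin k)} (hc : c ∈ σ.cycleFactorsFinset)
    {S : Finset (Fin k)} (hS : ∀ x, x ∈ S ↔ σ x ∈ S) :
    c.support ⊆ S ∨ c.support ⊆ Sᶜ := by
  by_cases hx : ∃ x ∈ c.support, x ∈ S
  · left
    obtain ⟨x, hx, hxS⟩ := hx
    intro y hy
    have hsc : σ.SameCycle x y := by
      have := (eq_cycleOf_of_mem_cycleFactorsFinset_iff _ _ hc x).mpr hx
      rw [this] at hy
      exact (Equiv.Perm.mem_support_cycleOf_iff.mp hy).1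
    obtain ⟨n, rfl⟩ := hsc
    exact zpow_mem_of_inv hS n hxS
  · right
    push_neg at hx
    intro y hy
    simpa using hx y hy


set_option maxHeartbeats 1000000 in
lemma key1 (χ₁ χ₂ : M → ℂ) (h : Fin k → M) (σ : Equiv.Perm (Fin k)) :
    (∏ c ∈ σ.cycleFactorsFinset, (χ₁ (cycleProd h c) + χ₂ (cycleProd h c))) *
      ∏ i ∈ Finset.univ.filter (fun i => σ i = i), (χ₁ (h i) + χ₂ (h i))
    = ∑ S ∈ Finset.univ.filter (fun S : Finset (Fin k) => ∀ x, x ∈ S ↔ σ x ∈ S),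
        (((∏ c ∈ σ.cycleFactorsFinset.filter fun c => c.support ⊆ S, χ₁ (cycleProd h c)) *
           ∏ i ∈ S.filter fun i => σ i = i, χ₁ (h i)) *
         ((∏ c ∈ σ.cycleFactorsFinset.filter fun c => c.support ⊆ Sᶜ, χ₂ (cycleProd h c)) *
           ∏ i ∈ Sᶜ.filter fun i => σ i = i, χ₂ (h i))) := by
  classical
  rw [Finset.prod_add, Finset.prod_add, Finset.sum_mul_sum, ← Finset.sum_product']
  -- bijection between pairs (T, U) and invariant sets S
  apply Finset.sum_nbij'
    (i := fun TU : Finset (Equiv.Perm (Fin k)) × Finset (Fin k) =>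
      TU.2 ∪ TU.1.biUnion Equiv.Perm.support)
    (j := fun S => (σ.cycleFactorsFinset.filter (fun c => c.support ⊆ S),
      S.filter (fun i => σ i = i)))
  · -- hi
    rintro ⟨T, U⟩ hTU
    obtain ⟨hT, hU⟩ := Finset.mem_product.mp hTU
    rw [Finset.mem_powerset] at hT hU
    refine Finset.mem_filter.mpr ⟨Finset.mem_univ _, fun x => ?_⟩
    simp only [Finset.mem_union, Finset.mem_biUnion]
    constructor
    · rintro (hx | ⟨c, hcT, hx⟩)
      · have := (Finset.mem_filter.mp (hU hx)).2
        rw [this]; exact Or.inl hx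
      · exact Or.inr ⟨c, hcT, (apply_mem_support_iff (hT hcT) x).mpr hx⟩
    · rintro (hx | ⟨c, hcT, hx⟩)
      · have hfix := (Finset.mem_filter.mp (hU hx)).2
        have : σ x = x := σ.injective hfix
        rw [← this]; exact Or.inl hx
      · exact Or.inr ⟨c, hcT, (apply_mem_support_iff (hT hcT) x).mp hx⟩
  · -- hj
    intro S hS
    refine Finset.mem_product.mpr ⟨Finset.mem_powerset.mpr (Finset.filter_subset _ _), ?_⟩
    refine Finset.mem_powerset.mpr ?_
    intro i hi
    exact Finset.mem_filter.mpr ⟨Finset.mem_univ _, (Finset.mem_filter.mp hi).2⟩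
  · -- left inverse
    rintro ⟨T, U⟩ hTU
    obtain ⟨hT, hU⟩ := Finset.mem_product.mp hTU
    rw [Finset.mem_powerset] at hT hU
    exact Prod.ext (filterT_eq hT hU) (filterU_eq hT hU)
  · -- right inverse
    intro S hS
    have hinv := (Finset.mem_filter.mp hS).2
    ext x
    simp only [Finset.mem_union, Finset.mem_filter, Finset.mem_biUnion]
    constructor
    · rintro (⟨hxS, _⟩ | ⟨c, ⟨hccf, hcsub⟩, hxc⟩)
      · exact hxS
      · exact hcsub hxc
    · intro hxS
      by_cases hfix : σ x = x
      · exact Or.inl ⟨hxS, hfix⟩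
      · have hxsupp : x ∈ σ.support := Equiv.Perm.mem_support.mpr hfix
        have hc : σ.cycleOf x ∈ σ.cycleFactorsFinset :=
          Equiv.Perm.cycleOf_mem_cycleFactorsFinset_iff.mpr hxsupp
        have hxc : x ∈ (σ.cycleOf x).support :=
          Equiv.Perm.mem_support_cycleOf_iff.mpr ⟨Equiv.Perm.SameCycle.refl _ _, hxsupp⟩
        have hsub : (σ.cycleOf x).support ⊆ S := by
          rcases support_subset_or hc hinv with hsub | hsub
          · exact hsub
          · exact absurd (hsub hxc) (by simpa using hxS)
        exact Or.inr ⟨σ.cycleOf x, ⟨hc, hsub⟩, hxc⟩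
  · -- term equality
    rintro ⟨T, U⟩ hTU
    obtain ⟨hT, hU⟩ := Finset.mem_product.mp hTU
    rw [Finset.mem_powerset] at hT hU
    rw [filterT_eq hT hU, filterU_eq hT hU, filterTc_eq hT hU, filterUc_eq hT hU]
    ring
end Key1

section Key2
variable {M : Type*} [Monoid M] {k : ℕ}

set_option maxHeartbeats 1000000 in
lemma key2 (χ₁ χ₂ : M → ℂ) (h : Fin k → M) (S : Finset (Fin k)) :
    ∑ σ ∈ Finset.univ.filter (fun σ : Equiv.Perm (Fin k) => ∀ x, x ∈ S ↔ σ x ∈ S),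
      ((Equiv.Perm.sign σ : ℤ) : ℂ) *
        (((∏ c ∈ σ.cycleFactorsFinset.filter fun c => c.support ⊆ S, χ₁ (cycleProd h c)) *
           ∏ i ∈ S.filter fun i => σ i = i, χ₁ (h i)) *
         ((∏ c ∈ σ.cycleFactorsFinset.filter fun c => c.support ⊆ Sᶜ, χ₂ (cycleProd h c)) *
           ∏ i ∈ Sᶜ.filter fun i => σ i = i, χ₂ (h i)))
    = frobChar χ₁ S.card (fun i => h (S.orderIsoOfFin rfl i)) *
        frobChar χ₂ Sᶜ.card (fun i => h (Sᶜ.orderIsoOfFin rfl i)) := by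
  classical
  set m := S.card
  set m' := Sᶜ.card
  set f₁ : Fin m ≃ {x : Fin k // x ∈ S} := (S.orderIsoOfFin rfl).toEquiv with hf₁
  set f₂ : Fin m' ≃ {x : Fin k // x ∈ Sᶜ} := (Sᶜ.orderIsoOfFin rfl).toEquiv with hf₂
  have hmono₁ : Monotone fun i => ((f₁ i : Fin k)) :=
    fun a b hab => Subtype.coe_le_coe.mpr ((S.orderIsoOfFin rfl).monotone hab)
  have hmono₂ : Monotone fun i => ((f₂ i : Fin k)) :=
    fun a b hab => Subtype.coe_le_coe.mpr ((Sᶜ.orderIsoOfFin rfl).monotone hab)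
  -- extension map
  set Φ : Equiv.Perm (Fin m) × Equiv.Perm (Fin m') → Equiv.Perm (Fin k) :=
    fun τ => (τ.1.extendDomain f₁) * (τ.2.extendDomain f₂) with hΦ
  -- basic facts about Φ
  have hext2_fix : ∀ (τ₂ : Equiv.Perm (Fin m')) (x : Fin k), x ∈ S →
      (τ₂.extendDomain f₂) x = x := by
    intro τ₂ x hx
    exact Equiv.Perm.extendDomain_apply_not_subtype _ _ (by simpa using hx)
  have hext1_fix : ∀ (τ₁ : Equiv.Perm (Fin m)) (x : Fin k), x ∉ S →
      (τ₁.extendDomain f₁) x = x := by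
    intro τ₁ x hx
    exact Equiv.Perm.extendDomain_apply_not_subtype _ _ hx
  have hΦ_mem : ∀ τ, ∀ x, x ∈ S ↔ (Φ τ) x ∈ S := by
    intro τ x
    constructor
    · intro hx
      show (τ.1.extendDomain f₁) ((τ.2.extendDomain f₂) x) ∈ S
      rw [hext2_fix _ _ hx, Equiv.Perm.extendDomain_apply_subtype _ _ hx]
      exact (f₁ _).2
    · intro hx
      by_contra hxS
      have h2 : (τ.2.extendDomain f₂) x ∈ Sᶜ := by
        rw [Equiv.Perm.extendDomain_apply_subtype _ _ (Finset.mem_compl.mpr hxS)]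
        exact (f₂ _).2
      have h3 : (τ.1.extendDomain f₁) ((τ.2.extendDomain f₂) x) ∈ Sᶜ := by
        rw [hext1_fix _ _ (Finset.mem_compl.mp h2)]
        exact h2
      exact Finset.mem_compl.mp h3 hx
  have happly₁ : ∀ τ (x : Fin m), (Φ τ) ((f₁ x : Fin k)) = ((f₁ (τ.1 x) : Fin k)) := by
    intro τ x
    show (τ.1.extendDomain f₁) ((τ.2.extendDomain f₂) _) = _
    rw [hext2_fix _ _ (f₁ x).2, Equiv.Perm.extendDomain_apply_image]
  have happly₂ : ∀ τ (x : Fin m'), (Φ τ) ((f₂ x : Fin k)) = ((f₂ (τ.2 x) : Fin k)) := by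
    intro τ x
    show (τ.1.extendDomain f₁) ((τ.2.extendDomain f₂) _) = _
    rw [Equiv.Perm.extendDomain_apply_image,
      hext1_fix _ _ (Finset.mem_compl.mp (f₂ (τ.2 x)).2)]
  have hdisj : ∀ τ : Equiv.Perm (Fin m) × Equiv.Perm (Fin m'), Equiv.Perm.Disjoint (τ.1.extendDomain f₁) (τ.2.extendDomain f₂) := by
    intro τ x
    by_cases hx : x ∈ S
    · right; exact hext2_fix _ _ hx
    · left; exact hext1_fix _ _ hx
  have hsupp1 : ∀ (τ₁ : Equiv.Perm (Fin m)), (τ₁.extendDomain f₁).support ⊆ S := by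
    intro τ₁ x hx
    rw [Equiv.Perm.support_extend_domain] at hx
    obtain ⟨a, _, rfl⟩ := Finset.mem_map.mp hx
    exact (f₁ a).2
  have hsupp2 : ∀ (τ₂ : Equiv.Perm (Fin m')), (τ₂.extendDomain f₂).support ⊆ Sᶜ := by
    intro τ₂ x hx
    rw [Equiv.Perm.support_extend_domain] at hx
    obtain ⟨a, _, rfl⟩ := Finset.mem_map.mp hx
    exact (f₂ a).2
  have hfilter1 : ∀ τ : Equiv.Perm (Fin m) × Equiv.Perm (Fin m'),
      ((Φ τ).cycleFactorsFinset.filter fun c => c.support ⊆ S) =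
        (τ.1.extendDomain f₁).cycleFactorsFinset := by
    intro τ
    show (((τ.1.extendDomain f₁) * (τ.2.extendDomain f₂)).cycleFactorsFinset.filter
      fun c => c.support ⊆ S) = _
    rw [(hdisj τ).cycleFactorsFinset_mul_eq_union]
    ext c
    simp only [Finset.mem_filter, Finset.mem_union]
    constructor
    · rintro ⟨hc | hc, hsub⟩
      · exact hc
      · exfalso
        obtain ⟨x, hx⟩ := (Equiv.Perm.mem_cycleFactorsFinset_iff.mp hc).1.nonempty_support
        have h1 : x ∈ Sᶜ := hsupp2 τ.2 (Equiv.Perm.mem_cycleFactorsFinset_support_le hc hx)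
        exact Finset.mem_compl.mp h1 (hsub hx)
    · intro hc
      exact ⟨Or.inl hc, fun x hx =>
        hsupp1 τ.1 (Equiv.Perm.mem_cycleFactorsFinset_support_le hc hx)⟩
  have hfilter2 : ∀ τ : Equiv.Perm (Fin m) × Equiv.Perm (Fin m'),
      ((Φ τ).cycleFactorsFinset.filter fun c => c.support ⊆ Sᶜ) =
        (τ.2.extendDomain f₂).cycleFactorsFinset := by
    intro τ
    show (((τ.1.extendDomain f₁) * (τ.2.extendDomain f₂)).cycleFactorsFinset.filter
      fun c => c.support ⊆ Sᶜ) = _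
    rw [(hdisj τ).cycleFactorsFinset_mul_eq_union]
    ext c
    simp only [Finset.mem_filter, Finset.mem_union]
    constructor
    · rintro ⟨hc | hc, hsub⟩
      · exfalso
        obtain ⟨x, hx⟩ := (Equiv.Perm.mem_cycleFactorsFinset_iff.mp hc).1.nonempty_support
        have h1 : x ∈ S := hsupp1 τ.1 (Equiv.Perm.mem_cycleFactorsFinset_support_le hc hx)
        exact Finset.mem_compl.mp (hsub hx) h1
      · exact hc
    · intro hc
      exact ⟨Or.inr hc, fun x hx =>
        hsupp2 τ.2 (Equiv.Perm.mem_cycleFactorsFinset_support_le hc hx)⟩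
  have hprod1 : ∀ (τ₁ : Equiv.Perm (Fin m)),
      (∏ c ∈ (τ₁.extendDomain f₁).cycleFactorsFinset, χ₁ (cycleProd h c)) =
        ∏ c ∈ τ₁.cycleFactorsFinset, χ₁ (cycleProd (fun i => h ((f₁ i : Fin k))) c) := by
    intro τ₁
    rw [cycleFactorsFinset_extendDomain, Finset.prod_image (fun a _ b _ hab => by
      exact Equiv.Perm.extendDomainHom_injective f₁ hab)]
    exact Finset.prod_congr rfl fun c _ => by rw [cycleProd_extendDomain f₁ hmono₁]
  have hprod2 : ∀ (τ₂ : Equiv.Perm (Fin m')),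
      (∏ c ∈ (τ₂.extendDomain f₂).cycleFactorsFinset, χ₂ (cycleProd h c)) =
        ∏ c ∈ τ₂.cycleFactorsFinset, χ₂ (cycleProd (fun i => h ((f₂ i : Fin k))) c) := by
    intro τ₂
    rw [cycleFactorsFinset_extendDomain, Finset.prod_image (fun a _ b _ hab => by
      exact Equiv.Perm.extendDomainHom_injective f₂ hab)]
    exact Finset.prod_congr rfl fun c _ => by rw [cycleProd_extendDomain f₂ hmono₂]
  have hfix1 : ∀ τ : Equiv.Perm (Fin m) × Equiv.Perm (Fin m'),
      S.filter (fun i => (Φ τ) i = i) =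
        (Finset.univ.filter fun i => τ.1 i = i).image (fun i => ((f₁ i : Fin k))) := by
    intro τ
    ext x
    simp only [Finset.mem_filter, Finset.mem_image, Finset.mem_univ, true_and]
    constructor
    · rintro ⟨hxS, hfix⟩
      refine ⟨f₁.symm ⟨x, hxS⟩, ?_, by simp⟩
      have h1 := happly₁ τ (f₁.symm ⟨x, hxS⟩)
      rw [Equiv.apply_symm_apply] at h1
      have h2 : x = ((f₁ (τ.1 (f₁.symm ⟨x, hxS⟩))) : Fin k) := by
        rw [← h1]; exact hfix.symm
      have h3 : x = ((f₁ (f₁.symm ⟨x, hxS⟩)) : Fin k) := by simp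
      exact f₁.injective (Subtype.coe_injective (h2.symm.trans h3))
    · rintro ⟨i, hfix, rfl⟩
      exact ⟨(f₁ i).2, by rw [happly₁ τ i, hfix]⟩
  have hfix2 : ∀ τ : Equiv.Perm (Fin m) × Equiv.Perm (Fin m'),
      Sᶜ.filter (fun i => (Φ τ) i = i) =
        (Finset.univ.filter fun i => τ.2 i = i).image (fun i => ((f₂ i : Fin k))) := by
    intro τ
    ext x
    simp only [Finset.mem_filter, Finset.mem_image, Finset.mem_univ, true_and]
    constructor
    · rintro ⟨hxS, hfix⟩
      refine ⟨f₂.symm ⟨x, hxS⟩, ?_, by simp⟩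
      have h1 := happly₂ τ (f₂.symm ⟨x, hxS⟩)
      rw [Equiv.apply_symm_apply] at h1
      have h2 : x = ((f₂ (τ.2 (f₂.symm ⟨x, hxS⟩))) : Fin k) := by
        rw [← h1]; exact hfix.symm
      have h3 : x = ((f₂ (f₂.symm ⟨x, hxS⟩)) : Fin k) := by simp
      exact f₂.injective (Subtype.coe_injective (h2.symm.trans h3))
    · rintro ⟨i, hfix, rfl⟩
      exact ⟨(f₂ i).2, by rw [happly₂ τ i, hfix]⟩
  have hsign : ∀ τ : Equiv.Perm (Fin m) × Equiv.Perm (Fin m'),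
      ((Equiv.Perm.sign (Φ τ) : ℤ) : ℂ) =
        ((Equiv.Perm.sign τ.1 : ℤ) : ℂ) * ((Equiv.Perm.sign τ.2 : ℤ) : ℂ) := by
    intro τ
    show ((Equiv.Perm.sign ((τ.1.extendDomain f₁) * (τ.2.extendDomain f₂)) : ℤ) : ℂ) = _
    rw [Equiv.Perm.sign_mul, Equiv.Perm.sign_extendDomain, Equiv.Perm.sign_extendDomain]
    push_cast
    ring
  -- now the main computation
  have hrhs1 : (fun i => h ((S.orderIsoOfFin rfl) i : Fin k)) = fun i => h ((f₁ i : Fin k)) := rfl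
  have hrhs2 : (fun i => h ((Sᶜ.orderIsoOfFin rfl) i : Fin k)) = fun i => h ((f₂ i : Fin k)) := rfl
  have hsum : ∀ (A : Equiv.Perm (Fin m) → ℂ) (B : Equiv.Perm (Fin m') → ℂ),
      (∑ τ₁, A τ₁) * (∑ τ₂, B τ₂) = ∑ τ : Equiv.Perm (Fin m) × Equiv.Perm (Fin m'), A τ.1 * B τ.2 := by
    intro A B
    rw [Fintype.sum_prod_type]
    exact Fintype.sum_mul_sum A B
  rw [hrhs1, hrhs2, frobChar, frobChar, hsum]
  refine (Finset.sum_bij' (M := ℂ) (fun (τ : Equiv.Perm (Fin m) × Equiv.Perm (Fin m'))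
      (_ : τ ∈ Finset.univ) => Φ τ)
    (fun σ hσ =>
      (f₁.permCongr.symm (σ.subtypePerm (fun x => ((Finset.mem_filter.mp hσ).2 x).symm)),
       f₂.permCongr.symm (σ.subtypePerm (fun x => by
        have := (Finset.mem_filter.mp hσ).2
        simp only [Finset.mem_compl]
        exact (not_iff_not.mpr (this x)).symm)))) ?_ ?_ ?_ ?_ ?_).symm
  · intro τ _
    exact Finset.mem_filter.mpr ⟨Finset.mem_univ _, hΦ_mem τ⟩
  · intro σ hσ
    exact Finset.mem_univ _
  · -- left inverse : Ψ (Φ τ) = τ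
    intro τ _
    have hc1 : ∀ (hp : ∀ x, (Φ τ) x ∈ S ↔ x ∈ S) (x : Fin m),
        f₁.permCongr.symm ((Φ τ).subtypePerm hp) x = τ.1 x := by
      intro hp x
      apply f₁.injective
      apply Subtype.coe_injective
      simp only [Equiv.permCongr_symm, Equiv.permCongr_apply, Equiv.symm_symm,
        Equiv.apply_symm_apply, Equiv.Perm.subtypePerm_apply]
      exact happly₁ τ x
    have hc2 : ∀ (hp : ∀ x, (Φ τ) x ∈ Sᶜ ↔ x ∈ Sᶜ) (x : Fin m'),
        f₂.permCongr.symm ((Φ τ).subtypePerm hp) x = τ.2 x := by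
      intro hp x
      apply f₂.injective
      apply Subtype.coe_injective
      simp only [Equiv.permCongr_symm, Equiv.permCongr_apply, Equiv.symm_symm,
        Equiv.apply_symm_apply, Equiv.Perm.subtypePerm_apply]
      exact happly₂ τ x
    exact Prod.ext (Equiv.ext (hc1 _)) (Equiv.ext (hc2 _))
  · -- right inverse : Φ (Ψ σ) = σ
    intro σ hσ
    have hinv := (Finset.mem_filter.mp hσ).2
    ext x
    simp only [hΦ, Equiv.Perm.mul_apply]
    by_cases hx : x ∈ S
    · rw [hext2_fix _ _ hx, Equiv.Perm.extendDomain_apply_subtype _ _ hx]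
      simp only [Equiv.permCongr_symm, Equiv.permCongr_apply, Equiv.symm_symm,
        Equiv.apply_symm_apply, Equiv.Perm.subtypePerm_apply]
    · have hx' : x ∈ Sᶜ := Finset.mem_compl.mpr hx
      have hσx : σ x ∉ S := fun hc => hx ((hinv x).mpr hc)
      rw [Equiv.Perm.extendDomain_apply_subtype _ _ hx']
      simp only [Equiv.permCongr_symm, Equiv.permCongr_apply, Equiv.symm_symm,
        Equiv.apply_symm_apply, Equiv.Perm.subtypePerm_apply]
      exact congrArg _ (hext1_fix _ _ hσx)
  · -- term equality
    intro τ _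
    rw [hsign τ, hfilter1 τ, hfilter2 τ, hprod1 τ.1, hprod2 τ.2, hfix1 τ, hfix2 τ,
      Finset.prod_image (fun a _ b _ hab => f₁.injective (Subtype.coe_injective hab)),
      Finset.prod_image (fun a _ b _ hab => f₂.injective (Subtype.coe_injective hab))]
    ring
end Key2


/-- **Frobenius `k`-characters of a sum of trace-like functions.** For trace-like
functions `χ⁽¹⁾, χ⁽²⁾ : G → ℂ` and `χ = χ⁽¹⁾ + χ⁽²⁾`, the Frobenius `k`-characters
satisfy `χ_k(h₁, …, h_k) = Σ_{S ⊆ {1,…,k}} χ⁽¹⁾_{|S|}(h_S) · χ⁽²⁾_{k−|S|}(h_{Sᶜ})`,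
where for `S = {i₁ < ⋯ < i_m}` one writes `h_S = (h_{i₁}, …, h_{i_m})` and
`χ⁽ⁱ⁾₀ = 1`.  (Equivalently, it is the shuffle-sum formula.) -/
theorem frobChar_add {G : Type*} [Group G] (χ₁ χ₂ : G → ℂ)
    (htr₁ : ∀ g h : G, χ₁ (g * h) = χ₁ (h * g))
    (htr₂ : ∀ g h : G, χ₂ (g * h) = χ₂ (h * g))
    (k : ℕ) (hk : 1 ≤ k) (h : Fin k → G) :
    frobChar (fun g => χ₁ g + χ₂ g) k h =
      ∑ S : Finset (Fin k),
        frobChar χ₁ S.card (fun i => h (S.orderIsoOfFin rfl i)) *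
          frobChar χ₂ Sᶜ.card (fun i => h (Sᶜ.orderIsoOfFin rfl i)) := by
  classical
  have hdef : frobChar (fun g => χ₁ g + χ₂ g) k h =
      ∑ σ : Equiv.Perm (Fin k), ((Equiv.Perm.sign σ : ℤ) : ℂ) *
        ((∏ c ∈ σ.cycleFactorsFinset, (χ₁ (cycleProd h c) + χ₂ (cycleProd h c))) *
          ∏ i ∈ Finset.univ.filter fun i => σ i = i, (χ₁ (h i) + χ₂ (h i))) := rfl
  rw [hdef]
  calc
    ∑ σ : Equiv.Perm (Fin k), ((Equiv.Perm.sign σ : ℤ) : ℂ) *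
        ((∏ c ∈ σ.cycleFactorsFinset, (χ₁ (cycleProd h c) + χ₂ (cycleProd h c))) *
          ∏ i ∈ Finset.univ.filter fun i => σ i = i, (χ₁ (h i) + χ₂ (h i)))
      = ∑ σ : Equiv.Perm (Fin k),
          ∑ S ∈ Finset.univ.filter (fun S : Finset (Fin k) => ∀ x, x ∈ S ↔ σ x ∈ S),
            ((Equiv.Perm.sign σ : ℤ) : ℂ) *
        (((∏ c ∈ σ.cycleFactorsFinset.filter fun c => c.support ⊆ S, χ₁ (cycleProd h c)) *
           ∏ i ∈ S.filter fun i => σ i = i, χ₁ (h i)) *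
         ((∏ c ∈ σ.cycleFactorsFinset.filter fun c => c.support ⊆ Sᶜ, χ₂ (cycleProd h c)) *
           ∏ i ∈ Sᶜ.filter fun i => σ i = i, χ₂ (h i))) := by
        refine Finset.sum_congr rfl fun σ _ => ?_
        rw [key1 χ₁ χ₂ h σ, Finset.mul_sum]
    _ = ∑ σ : Equiv.Perm (Fin k), ∑ S : Finset (Fin k),
          if (∀ x, x ∈ S ↔ σ x ∈ S) then
            ((Equiv.Perm.sign σ : ℤ) : ℂ) *
        (((∏ c ∈ σ.cycleFactorsFinset.filter fun c => c.support ⊆ S, χ₁ (cycleProd h c)) *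
           ∏ i ∈ S.filter fun i => σ i = i, χ₁ (h i)) *
         ((∏ c ∈ σ.cycleFactorsFinset.filter fun c => c.support ⊆ Sᶜ, χ₂ (cycleProd h c)) *
           ∏ i ∈ Sᶜ.filter fun i => σ i = i, χ₂ (h i))) else 0 :=
        Finset.sum_congr rfl fun σ _ => Finset.sum_filter _ _
    _ = ∑ S : Finset (Fin k), ∑ σ : Equiv.Perm (Fin k),
          if (∀ x, x ∈ S ↔ σ x ∈ S) then
            ((Equiv.Perm.sign σ : ℤ) : ℂ) *
        (((∏ c ∈ σ.cycleFactorsFinset.filter fun c => c.support ⊆ S, χ₁ (cycleProd h c)) *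
           ∏ i ∈ S.filter fun i => σ i = i, χ₁ (h i)) *
         ((∏ c ∈ σ.cycleFactorsFinset.filter fun c => c.support ⊆ Sᶜ, χ₂ (cycleProd h c)) *
           ∏ i ∈ Sᶜ.filter fun i => σ i = i, χ₂ (h i))) else 0 := Finset.sum_comm
    _ = ∑ S : Finset (Fin k),
          ∑ σ ∈ Finset.univ.filter (fun σ : Equiv.Perm (Fin k) => ∀ x, x ∈ S ↔ σ x ∈ S),
            ((Equiv.Perm.sign σ : ℤ) : ℂ) *
        (((∏ c ∈ σ.cycleFactorsFinset.filter fun c => c.support ⊆ S, χ₁ (cycleProd h c)) *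
           ∏ i ∈ S.filter fun i => σ i = i, χ₁ (h i)) *
         ((∏ c ∈ σ.cycleFactorsFinset.filter fun c => c.support ⊆ Sᶜ, χ₂ (cycleProd h c)) *
           ∏ i ∈ Sᶜ.filter fun i => σ i = i, χ₂ (h i))) :=
        Finset.sum_congr rfl fun S _ => (Finset.sum_filter _ _).symm
    _ = ∑ S : Finset (Fin k),
        frobChar χ₁ S.card (fun i => h (S.orderIsoOfFin rfl i)) *
          frobChar χ₂ Sᶜ.card (fun i => h (Sᶜ.orderIsoOfFin rfl i)) :=
        Finset.sum_congr rfl fun S _ => key2 χ₁ χ₂ h S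
end

section
/- Let G be a finite group, ρ: G → GL(n, ℂ) an n-dimensional representation with character χ(g) = tr ρ(g), and let χ_n be its Frobenius n-character. Then in the polynomial ring ℂ[x_g : g ∈ G], (1/n!) Σ_{h₁,…,h_n ∈ G} χ_n(h₁, …, h_n) x_{h₁}⋯x_{h_n} = det(Σ_{g∈G} x_g ρ(g)). -/
section FrobeniusHelpers

open Finset

variable {R : Type*} [CommRing R] {κ : Type*} [Fintype κ] [DecidableEq κ]

def arrowEquivOfEquiv {α β γ : Type*} (e : α ≃ β) : (β → γ) ≃ (α → γ) where
  toFun := fun u a => u (e a)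
  invFun := fun v b => v (e.symm b)
  left_inv := fun u => funext fun b => by
    show u (e (e.symm b)) = u b
    rw [Equiv.apply_symm_apply]
  right_inv := fun v => funext fun a => by
    show v (e.symm (e a)) = v a
    rw [Equiv.symm_apply_apply]

lemma sum_comp_pi {α β γ M : Type*} [Fintype α] [Fintype β] [DecidableEq α] [DecidableEq β]
    [Fintype γ] [AddCommMonoid M] (e : α ≃ β) (F : (α → γ) → M) :
    ∑ u : β → γ, F (fun a => u (e a)) = ∑ v : α → γ, F v :=
  Equiv.sum_comp (arrowEquivOfEquiv e) F

lemma prod_entry : ∀ (m : ℕ) (B : Fin m → Matrix κ κ R) (a b : κ),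
    (List.ofFn B).prod a b = ∑ w : Fin m → κ,
      (∏ t : Fin m, B t ((Fin.cons a w : Fin (m+1) → κ) (Fin.castSucc t))
        ((Fin.cons a w : Fin (m+1) → κ) t.succ)) *
      (if (Fin.cons a w : Fin (m+1) → κ) (Fin.last m) = b then 1 else 0) := by
  intro m
  induction m with
  | zero =>
      intro B a b
      rw [Fintype.sum_unique]
      simp [Matrix.one_apply]
  | succ m ih =>
      intro B a b
      rw [List.ofFn_succ, List.prod_cons, Matrix.mul_apply]
      rw [← Equiv.sum_comp (Fin.consEquiv (fun _ : Fin (m+1) => κ))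
        (g := fun w : Fin (m+1) → κ =>
          (∏ t : Fin (m+1), B t ((Fin.cons a w : Fin (m+2) → κ) (Fin.castSucc t))
            ((Fin.cons a w : Fin (m+2) → κ) t.succ)) *
          (if (Fin.cons a w : Fin (m+2) → κ) (Fin.last (m+1)) = b then 1 else 0))]
      rw [Fintype.sum_prod_type]
      apply Finset.sum_congr rfl
      intro j _
      rw [ih (fun i => B i.succ) j b, Finset.mul_sum]
      apply Finset.sum_congr rfl
      intro w' _
      have hw : (Fin.consEquiv (fun _ : Fin (m+1) => κ)) (j, w') = Fin.cons j w' := rfl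
      rw [hw]
      rw [Fin.prod_univ_succ]
      have h0 : (Fin.cons a (Fin.cons j w') : Fin (m+2) → κ) (Fin.castSucc 0) = a := by
        simp
      have h1 : (Fin.cons a (Fin.cons j w') : Fin (m+2) → κ) (Fin.succ 0) = j := by
        simp
      rw [h0, h1, mul_assoc]
      congr 1

lemma snoc_succ_cyclic {m : ℕ} (v : Fin (m+1) → κ) (t : Fin (m+1)) :
    (Fin.snoc v (v 0) : Fin (m+2) → κ) t.succ = v (t + 1) := by
  rcases eq_or_ne t (Fin.last m) with h | h
  · subst h
    rw [Fin.succ_last, Fin.snoc_last]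
    congr 1
    rw [Fin.last_add_one]
  · have ht : (t : ℕ) < m := by
      have h1 := t.isLt
      have h2 : (t : ℕ) ≠ m := fun hh => h (Fin.ext hh)
      omega
    have hval : ((t + 1 : Fin (m+1)) : ℕ) = (t : ℕ) + 1 :=
      Fin.val_add_one_of_lt (lt_of_le_of_ne (Fin.le_last t) h)
    have : t.succ = Fin.castSucc (t + 1) := by
      apply Fin.ext
      rw [Fin.val_succ, Fin.coe_castSucc, hval]
    rw [this, Fin.snoc_castSucc]

lemma trace_ofFn_prod (m : ℕ) (B : Fin (m+1) → Matrix κ κ R) :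
    Matrix.trace (List.ofFn B).prod
      = ∑ v : Fin (m+1) → κ, ∏ t : Fin (m+1), B t (v t) (v (t + 1)) := by
  have htr : Matrix.trace (List.ofFn B).prod = ∑ a : κ, (List.ofFn B).prod a a := rfl
  set F : (Fin (m+2) → κ) → R := fun u =>
    (∏ t : Fin (m+1), B t (u (Fin.castSucc t)) (u t.succ)) *
      (if u (Fin.last (m+1)) = u 0 then 1 else 0) with hF
  have h2 : ∑ a : κ, (List.ofFn B).prod a a = ∑ u : Fin (m+2) → κ, F u := by
    rw [← Equiv.sum_comp (Fin.consEquiv (fun _ : Fin (m+2) => κ)) F, Fintype.sum_prod_type]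
    apply Finset.sum_congr rfl
    intro a _
    rw [prod_entry (m+1) B a a]
    apply Finset.sum_congr rfl
    intro w _
    show _ = F (Fin.cons a w)
    simp only [hF, Fin.cons_zero]
  have h3 : ∑ u : Fin (m+2) → κ, F u
      = ∑ v : Fin (m+1) → κ, ∏ t : Fin (m+1), B t (v t) (v (t + 1)) := by
    rw [← Equiv.sum_comp (Fin.snocEquiv (fun _ : Fin (m+2) => κ)) F,
      Fintype.sum_prod_type, Finset.sum_comm]
    apply Finset.sum_congr rfl
    intro v _
    have hstep : ∀ y : κ, F ((Fin.snocEquiv (fun _ : Fin (m+2) => κ)) (y, v))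
        = if y = v 0 then (∏ t : Fin (m+1), B t (v t) (v (t + 1))) else 0 := by
      intro y
      have hins : (Fin.snocEquiv (fun _ : Fin (m+2) => κ)) (y, v)
          = (Fin.snoc v y : Fin (m+2) → κ) := rfl
      rw [hins]
      have h0 : (Fin.snoc v y : Fin (m+2) → κ) 0 = v 0 := by
        rw [show (0 : Fin (m+2)) = Fin.castSucc 0 from (Fin.castSucc_zero).symm,
          Fin.snoc_castSucc]
      simp only [hF, Fin.snoc_last, h0, mul_ite, mul_one, mul_zero]
      rcases eq_or_ne y (v 0) with hy | hy
      · subst hy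
        simp only [if_pos rfl]
        apply Finset.prod_congr rfl
        intro t _
        rw [Fin.snoc_castSucc, snoc_succ_cyclic]
      · simp [hy]
    simp_rw [hstep]
    rw [Finset.sum_ite_eq' Finset.univ (v 0)
      (fun _ => ∏ t : Fin (m+1), B t (v t) (v (t + 1)))]
    simp
  rw [htr, h2, h3]

variable {n : ℕ}

def Zfun (A : Fin n → Matrix κ κ R) (t : Finset (Fin n)) (q : Fin n → Fin n)
    (hq : ∀ i ∈ t, q i ∈ t) : R :=
  ∑ u : {i // i ∈ t} → κ, ∏ i : {i // i ∈ t}, A i.1 (u i) (u ⟨q i.1, hq i.1 i.2⟩)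

lemma Zfun_congr (A : Fin n → Matrix κ κ R) (t : Finset (Fin n)) (q q' : Fin n → Fin n)
    (hq : ∀ i ∈ t, q i ∈ t) (hq' : ∀ i ∈ t, q' i ∈ t) (h : ∀ i ∈ t, q i = q' i) :
    Zfun A t q hq = Zfun A t q' hq' := by
  unfold Zfun
  apply Finset.sum_congr rfl
  intro u _
  apply Finset.prod_congr rfl
  intro i _
  congr 2
  exact Subtype.ext (h i.1 i.2)

lemma Zfun_id (A : Fin n → Matrix κ κ R) (t : Finset (Fin n)) (q : Fin n → Fin n)
    (hq : ∀ i ∈ t, q i ∈ t) (h : ∀ i ∈ t, q i = i) :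
    Zfun A t q hq = ∏ i ∈ t, Matrix.trace (A i) := by
  unfold Zfun
  have step : ∀ (u : {i // i ∈ t} → κ) (i : {i // i ∈ t}),
      A i.1 (u i) (u ⟨q i.1, hq i.1 i.2⟩) = A i.1 (u i) (u i) := by
    intro u i
    congr 2
    exact Subtype.ext (h i.1 i.2)
  simp_rw [step]
  rw [← Fintype.prod_sum (fun (i : {i // i ∈ t}) (j : κ) => A i.1 j j)]
  rw [← Finset.prod_coe_sort t (fun i => Matrix.trace (A i))]
  apply Finset.prod_congr rfl
  intro i _
  rfl

lemma Zfun_split (A : Fin n → Matrix κ κ R) {t s : Finset (Fin n)} (hst : s ⊆ t)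
    (q : Fin n → Fin n) (hq : ∀ i ∈ t, q i ∈ t)
    (hqs : ∀ i ∈ s, q i ∈ s) (hqd : ∀ i ∈ t \ s, q i ∈ t \ s) :
    Zfun A t q hq = Zfun A s q hqs * Zfun A (t \ s) q hqd := by
  classical
  let e : ({i // i ∈ s} ⊕ {i // i ∈ t \ s}) ≃ {i // i ∈ t} :=
    { toFun := Sum.elim (fun i => ⟨i.1, hst i.2⟩)
        (fun i => ⟨i.1, (Finset.mem_sdiff.mp i.2).1⟩)
      invFun := fun i => if h : i.1 ∈ s then Sum.inl ⟨i.1, h⟩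
        else Sum.inr ⟨i.1, Finset.mem_sdiff.mpr ⟨i.2, h⟩⟩
      left_inv := by
        rintro (⟨i, hi⟩ | ⟨i, hi⟩)
        · exact dif_pos hi
        · exact dif_neg (Finset.mem_sdiff.mp hi).2
      right_inv := by
        rintro ⟨i, hi⟩
        by_cases h : i ∈ s <;> simp [h] }
  unfold Zfun
  rw [← sum_comp_pi e.symm
    (F := fun u : {i // i ∈ t} → κ =>
      ∏ i : {i // i ∈ t}, A i.1 (u i) (u ⟨q i.1, hq i.1 i.2⟩))]
  rw [← Equiv.sum_comp (Equiv.sumArrowEquivProdArrow _ _ κ).symm, Fintype.sum_prod_type]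
  rw [Finset.sum_mul_sum]
  apply Finset.sum_congr rfl
  intro u1 _
  apply Finset.sum_congr rfl
  intro u2 _
  have helim : ∀ p : ({i // i ∈ s} → κ) × ({i // i ∈ t \ s} → κ),
      (Equiv.sumArrowEquivProdArrow _ _ κ).symm p = Sum.elim p.1 p.2 := fun _ => rfl
  rw [helim]
  rw [← Equiv.prod_comp e (fun i : {i // i ∈ t} =>
    A i.1 (Sum.elim u1 u2 (e.symm i)) (Sum.elim u1 u2 (e.symm ⟨q i.1, hq i.1 i.2⟩)))]
  rw [Fintype.prod_sum_type]
  congr 1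
  · apply Finset.prod_congr rfl
    intro i _
    have h1 : e.symm (e (Sum.inl i)) = Sum.inl i := e.symm_apply_apply _
    have h2 : e.symm ⟨q (e (Sum.inl i)).1, hq _ (e (Sum.inl i)).2⟩
        = Sum.inl ⟨q i.1, hqs i.1 i.2⟩ := by
      rw [Equiv.symm_apply_eq]
      rfl
    rw [h1, h2]
    rfl
  · apply Finset.prod_congr rfl
    intro i _
    have h1 : e.symm (e (Sum.inr i)) = Sum.inr i := e.symm_apply_apply _
    have h2 : e.symm ⟨q (e (Sum.inr i)).1, hq _ (e (Sum.inr i)).2⟩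
        = Sum.inr ⟨q i.1, hqd i.1 i.2⟩ := by
      rw [Equiv.symm_apply_eq]
      rfl
    rw [h1, h2]
    rfl

lemma Zfun_cycle (A : Fin n → Matrix κ κ R) {c : Equiv.Perm (Fin n)} (hc : c.IsCycle)
    (hq : ∀ i ∈ c.support, c i ∈ c.support) :
    Zfun A c.support c hq = Matrix.trace (cycleProd A c) := by
  classical
  have h2 : 2 ≤ c.support.card := hc.two_le_card_support
  obtain ⟨m, hm⟩ : ∃ m, c.support.card = m + 1 := ⟨c.support.card - 1, by omega⟩
  have hs : c.support.Nonempty := Finset.card_pos.mp (by omega)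
  set i0 : Fin n := c.support.min' hs with hi0def
  have hi0 : i0 ∈ c.support := c.support.min'_mem hs
  have hord : orderOf c = m + 1 := by rw [hc.orderOf, hm]
  set emap : Fin (m+1) → {i // i ∈ c.support} :=
    fun j => ⟨(c ^ (j : ℕ)) i0, Equiv.Perm.pow_apply_mem_support.mpr hi0⟩ with hemap
  have hinj : Function.Injective emap := by
    have key : ∀ a b : ℕ, a ≤ b → b < m + 1 → (c ^ a) i0 = (c ^ b) i0 → a = b := by
      intro a b hab hbm heq
      by_contra hne
      have h1 : (c ^ (b - a)) ((c ^ a) i0) = (c ^ a) i0 := by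
        rw [← Equiv.Perm.mul_apply, ← pow_add, Nat.sub_add_cancel hab, ← heq]
      have hfix : c ((c ^ a) i0) ≠ (c ^ a) i0 := by
        rw [← Equiv.Perm.mem_support]
        exact Equiv.Perm.pow_apply_mem_support.mpr hi0
      have hone : c ^ (b - a) = 1 := (hc.pow_eq_one_iff' hfix).mpr h1
      have hle : orderOf c ≤ b - a :=
        orderOf_le_of_pow_eq_one (by omega) hone
      omega
    intro j j' hjj
    have : (c ^ (j : ℕ)) i0 = (c ^ (j' : ℕ)) i0 := congrArg Subtype.val hjj
    rcases le_total (j : ℕ) (j' : ℕ) with h | h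
    · exact Fin.ext (key _ _ h j'.isLt this)
    · exact (Fin.ext (key _ _ h j.isLt this.symm)).symm
  have hbij : Function.Bijective emap :=
    (Fintype.bijective_iff_injective_and_card emap).mpr
      ⟨hinj, by rw [Fintype.card_fin, Fintype.card_coe, hm]⟩
  set eq : Fin (m+1) ≃ {i // i ∈ c.support} := Equiv.ofBijective emap hbij with heq
  have hkey : ∀ j : Fin (m+1),
      (⟨c (eq j).1, hq (eq j).1 (eq j).2⟩ : {i // i ∈ c.support}) = eq (j + 1) := by
    intro j
    apply Subtype.ext
    show c ((eq j).1) = ((c ^ (((j + 1) : Fin (m+1)) : ℕ)) i0)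
    have h1 : (eq j).1 = (c ^ (j : ℕ)) i0 := rfl
    have h2 : (((j + 1) : Fin (m+1)) : ℕ) = ((j : ℕ) + 1) % (m + 1) := by
      rw [Fin.val_add]
      congr 1
      have hm1 : 1 ≤ m := by omega
      simp [Fin.val_one']
      omega
    have hpow : ∀ jn : ℕ, c ^ ((jn + 1) % (m + 1)) = c ^ (jn + 1) := by
      intro jn
      rw [← hord]
      exact pow_mod_orderOf c (jn + 1)
    rw [h1, h2, hpow (j : ℕ), ← Equiv.Perm.mul_apply, ← pow_succ']
  have hstep : ∀ u : {i // i ∈ c.support} → κ,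
      (∏ i : {i // i ∈ c.support}, A i.1 (u i) (u ⟨c i.1, hq i.1 i.2⟩))
      = ∏ j : Fin (m+1), A ((c ^ (j : ℕ)) i0)
          ((fun j' => u (eq j')) j) ((fun j' => u (eq j')) (j + 1)) := by
    intro u
    rw [← Equiv.prod_comp eq (fun i => A i.1 (u i) (u ⟨c i.1, hq i.1 i.2⟩))]
    apply Finset.prod_congr rfl
    intro j _
    rw [hkey j]
    rfl
  unfold Zfun
  simp_rw [hstep]
  rw [sum_comp_pi eq (F := fun w : Fin (m+1) → κ =>
    ∏ j : Fin (m+1), A ((c ^ (j : ℕ)) i0) (w j) (w (j + 1)))]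
  rw [← trace_ofFn_prod m (fun j : Fin (m+1) => A ((c ^ (j : ℕ)) i0))]
  congr 1
  unfold cycleProd
  rw [dif_pos hs, hm]
  congr 1
  apply List.ext_getElem (by simp) (fun i h1 h2 => by
    simp only [List.getElem_ofFn, List.getElem_map, List.getElem_range, hi0def])

theorem claimC (A : Fin n → Matrix κ κ R) (σ : Equiv.Perm (Fin n)) :
    ∀ (t : Finset (Fin n)), σ.support ⊆ t → ∀ (hq : ∀ i ∈ t, σ i ∈ t),
    Zfun A t σ hq = (∏ c ∈ σ.cycleFactorsFinset, Matrix.trace (cycleProd A c)) *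
      ∏ i ∈ t.filter (fun i => σ i = i), Matrix.trace (A i) := by
  induction σ using Equiv.Perm.cycle_induction_on with
  | base_one =>
      intro t _ hq
      rw [Zfun_id A t _ hq (fun i _ => rfl)]
      rw [Equiv.Perm.cycleFactorsFinset_one]
      rw [Finset.filter_true_of_mem (fun i _ => Equiv.Perm.one_apply i)]
      rw [Finset.prod_empty, one_mul]
  | base_cycles c hc =>
      intro t hsup hq
      have h1 : ∀ i ∈ c.support, c i ∈ c.support :=
        fun i hi => Equiv.Perm.apply_mem_support.mpr hi
      have h2 : ∀ i ∈ t \ c.support, c i ∈ t \ c.support := by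
        intro i hi
        rcases Finset.mem_sdiff.mp hi with ⟨hit, his⟩
        have : c i = i := Equiv.Perm.notMem_support.mp his
        rw [this]
        exact hi
      rw [Zfun_split A hsup c hq h1 h2, Zfun_cycle A hc h1,
        Zfun_id A _ c h2 (fun i hi => Equiv.Perm.notMem_support.mp
          (Finset.mem_sdiff.mp hi).2)]
      rw [hc.cycleFactorsFinset_eq_singleton, Finset.prod_singleton]
      congr 2
      ext i
      simp only [Finset.mem_filter, Finset.mem_sdiff, Equiv.Perm.mem_support]
      tauto
  | induction_disjoint c τ hd hc ihc ihτ =>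
      intro t hsup hq
      have hsupmul : (c * τ).support = c.support ∪ τ.support := hd.support_mul
      have hcs : c.support ⊆ t := by
        intro i hi; exact hsup (by rw [hsupmul]; exact Finset.mem_union_left _ hi)
      have hts : τ.support ⊆ t := by
        intro i hi; exact hsup (by rw [hsupmul]; exact Finset.mem_union_right _ hi)
      have hdisj : _root_.Disjoint c.support τ.support := hd.disjoint_support
      -- values of c*τ
      have hon_s : ∀ i ∈ c.support, (c * τ) i = c i := by
        intro i hi
        have : τ i = i := Equiv.Perm.notMem_support.mp
          (Finset.disjoint_left.mp hdisj hi)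
        rw [Equiv.Perm.mul_apply, this]
      have hτ_not_s : ∀ i, i ∉ c.support → τ i ∉ c.support := by
        intro i hi
        by_cases h : i ∈ τ.support
        · exact Finset.disjoint_right.mp hdisj (Equiv.Perm.apply_mem_support.mpr h)
        · rw [Equiv.Perm.notMem_support.mp h]; exact hi
      have hoff_s : ∀ i, i ∉ c.support → (c * τ) i = τ i := by
        intro i hi
        rw [Equiv.Perm.mul_apply]
        exact Equiv.Perm.notMem_support.mp (hτ_not_s i hi)
      have hqs : ∀ i ∈ c.support, (c * τ) i ∈ c.support := by
        intro i hi
        rw [hon_s i hi]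
        exact Equiv.Perm.apply_mem_support.mpr hi
      have hqd : ∀ i ∈ t \ c.support, (c * τ) i ∈ t \ c.support := by
        intro i hi
        rcases Finset.mem_sdiff.mp hi with ⟨hit, his⟩
        rw [hoff_s i his]
        refine Finset.mem_sdiff.mpr ⟨?_, hτ_not_s i his⟩
        by_cases h : i ∈ τ.support
        · exact hts (Equiv.Perm.apply_mem_support.mpr h)
        · rw [Equiv.Perm.notMem_support.mp h]; exact hit
      rw [Zfun_split A hcs (⇑(c * τ)) hq hqs hqd]
      have hc1 : ∀ i ∈ c.support, c i ∈ c.support :=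
        fun i hi => Equiv.Perm.apply_mem_support.mpr hi
      rw [Zfun_congr A c.support (⇑(c * τ)) (⇑c) hqs hc1 hon_s, Zfun_cycle A hc hc1]
      have hτq : ∀ i ∈ t \ c.support, τ i ∈ t \ c.support := by
        intro i hi
        have := hqd i hi
        rwa [hoff_s i (Finset.mem_sdiff.mp hi).2] at this
      rw [Zfun_congr A (t \ c.support) (⇑(c * τ)) (⇑τ) hqd hτq
        (fun i hi => hoff_s i (Finset.mem_sdiff.mp hi).2)]
      have hτsub : τ.support ⊆ t \ c.support := by
        intro i hi
        exact Finset.mem_sdiff.mpr ⟨hts hi, Finset.disjoint_right.mp hdisj hi⟩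
      rw [ihτ (t \ c.support) hτsub hτq]
      -- combine
      have hcf : (c * τ).cycleFactorsFinset = insert c τ.cycleFactorsFinset := by
        rw [hd.cycleFactorsFinset_mul_eq_union, hc.cycleFactorsFinset_eq_singleton]
        rfl
      have hcnot : c ∉ τ.cycleFactorsFinset := by
        intro hmem
        obtain ⟨x, hx, -⟩ := id hc
        have hxc : x ∈ c.support := Equiv.Perm.mem_support.mpr hx
        have : c x = τ x := (Equiv.Perm.mem_cycleFactorsFinset_iff.mp hmem).2 x hxc
        have hτx : τ x = x := Equiv.Perm.notMem_support.mp
          (Finset.disjoint_left.mp hdisj hxc)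
        exact hx (this.trans hτx)
      rw [hcf, Finset.prod_insert hcnot]
      have hfix : t.filter (fun i => (c * τ) i = i)
          = (t \ c.support).filter (fun i => τ i = i) := by
        ext i
        simp only [Finset.mem_filter, Finset.mem_sdiff]
        constructor
        · rintro ⟨hit, hfix⟩
          have his : i ∉ c.support := by
            intro hi
            have := hon_s i hi
            rw [hfix] at this
            exact Equiv.Perm.mem_support.mp hi this.symm
          refine ⟨⟨hit, his⟩, ?_⟩
          rw [← hoff_s i his, hfix]
        · rintro ⟨⟨hit, his⟩, hfix⟩
          exact ⟨hit, by rw [hoff_s i his, hfix]⟩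
      rw [hfix]
      ring

theorem claimC_univ (A : Fin n → Matrix κ κ R) (σ : Equiv.Perm (Fin n)) :
    ∑ g : Fin n → κ, ∏ i, A i (g i) (g (σ i))
      = (∏ c ∈ σ.cycleFactorsFinset, Matrix.trace (cycleProd A c)) *
        ∏ i ∈ Finset.univ.filter (fun i => σ i = i), Matrix.trace (A i) := by
  classical
  rw [← claimC A σ Finset.univ (Finset.subset_univ _) (fun i _ => Finset.mem_univ _)]
  unfold Zfun
  let e : {i // i ∈ (Finset.univ : Finset (Fin n))} ≃ Fin n :=
    Equiv.subtypeUnivEquiv (fun x => Finset.mem_univ x)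
  rw [← sum_comp_pi e.symm
    (F := fun g : Fin n → κ => ∏ i, A i (g i) (g (σ i)))]
  apply Finset.sum_congr rfl
  intro u _
  rw [← Equiv.prod_comp e
    (fun i : Fin n => A i (u (e.symm i)) (u (e.symm (σ i))))]
  apply Finset.prod_congr rfl
  intro x _
  rfl

lemma cycleProd_hom {k : ℕ} {M N : Type*} [Monoid M] [Monoid N] (φ : M →* N)
    (h : Fin k → M) (c : Equiv.Perm (Fin k)) :
    cycleProd (fun i => φ (h i)) c = φ (cycleProd h c) := by
  unfold cycleProd
  split_ifs with h'
  · rw [← List.prod_hom _ φ, List.map_map]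
    rfl
  · exact (map_one φ).symm

lemma sign_sum_bij (M : Matrix (Fin n) (Fin n) R) (g : Fin n → Fin n)
    (hg : Function.Bijective g) :
    ∑ σ : Equiv.Perm (Fin n), ((Equiv.Perm.sign σ : ℤ) : R) * ∏ i, M (g i) (g (σ i))
      = M.det := by
  classical
  let π : Equiv.Perm (Fin n) := Equiv.ofBijective g hg
  have hprod : ∀ σ : Equiv.Perm (Fin n),
      ∏ i, M (g i) (g (σ i)) = ∏ i, M i ((π * σ * π⁻¹) i) := by
    intro σ
    rw [← Equiv.prod_comp π (fun j => M j ((π * σ * π⁻¹) j))]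
    apply Finset.prod_congr rfl
    intro i _
    show M (g i) (g (σ i)) = M (π i) (π (σ (π⁻¹ (π i))))
    rw [show π⁻¹ (π i) = i from π.symm_apply_apply i]
    rfl
  have hsign : ∀ σ : Equiv.Perm (Fin n),
      Equiv.Perm.sign (π * σ * π⁻¹) = Equiv.Perm.sign σ := by
    intro σ
    rw [map_mul, map_mul, mul_right_comm, ← map_mul, mul_inv_cancel, map_one, one_mul]
  let E : Equiv.Perm (Fin n) ≃ Equiv.Perm (Fin n) :=
    { toFun := fun σ => π * σ * π⁻¹
      invFun := fun τ => π⁻¹ * τ * π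
      left_inv := fun σ => by group
      right_inv := fun τ => by group }
  have hcomp := Equiv.sum_comp E (fun τ : Equiv.Perm (Fin n) =>
    ((Equiv.Perm.sign τ : ℤ) : R) * ∏ i, M i (τ i))
  simp_rw [hprod]
  calc ∑ x : Equiv.Perm (Fin n), ((Equiv.Perm.sign x : ℤ) : R) * ∏ i, M i ((π * x * π⁻¹) i)
      = ∑ x : Equiv.Perm (Fin n),
          ((Equiv.Perm.sign (E x) : ℤ) : R) * ∏ i, M i ((E x) i) := by
        apply Finset.sum_congr rfl
        intro x _
        show _ = ((Equiv.Perm.sign (π * x * π⁻¹) : ℤ) : R) * ∏ i, M i ((π * x * π⁻¹) i)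
        rw [hsign x]
    _ = ∑ τ : Equiv.Perm (Fin n), ((Equiv.Perm.sign τ : ℤ) : R) * ∏ i, M i (τ i) := hcomp
    _ = M.det := by
        rw [← Matrix.det_transpose M, Matrix.det_apply']
        apply Finset.sum_congr rfl
        intro σ _
        congr 1

lemma sign_sum_nonbij [NoZeroDivisors R] [CharZero R] (M : Matrix (Fin n) (Fin n) R)
    (g : Fin n → Fin n) (hg : ¬ Function.Injective g) :
    ∑ σ : Equiv.Perm (Fin n), ((Equiv.Perm.sign σ : ℤ) : R) * ∏ i, M (g i) (g (σ i))
      = 0 := by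
  classical
  rw [Function.not_injective_iff] at hg
  obtain ⟨a, b, hgab, hab⟩ := hg
  set f : Equiv.Perm (Fin n) → R := fun σ =>
    ((Equiv.Perm.sign σ : ℤ) : R) * ∏ i, M (g i) (g (σ i)) with hf
  have hgswap : ∀ i, g (Equiv.swap a b i) = g i := by
    intro i
    rcases eq_or_ne i a with h | h
    · subst h; rw [Equiv.swap_apply_left, hgab]
    rcases eq_or_ne i b with h' | h'
    · subst h'; rw [Equiv.swap_apply_right, hgab]
    · rw [Equiv.swap_apply_of_ne_of_ne h h']
  have key : ∀ σ, f (σ * Equiv.swap a b) = - f σ := by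
    intro σ
    have h1 : Equiv.Perm.sign (σ * Equiv.swap a b) = - Equiv.Perm.sign σ := by
      rw [map_mul, Equiv.Perm.sign_swap hab, mul_neg_one]
    have h2 : ∏ i, M (g i) (g ((σ * Equiv.swap a b) i)) = ∏ i, M (g i) (g (σ i)) := by
      calc ∏ i, M (g i) (g ((σ * Equiv.swap a b) i))
          = ∏ i, M (g (Equiv.swap a b i)) (g (σ (Equiv.swap a b i))) := by
            apply Finset.prod_congr rfl
            intro i _
            rw [hgswap i]
            rfl
        _ = ∏ i, M (g i) (g (σ i)) :=
            Equiv.prod_comp (Equiv.swap a b) (fun i => M (g i) (g (σ i)))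
    show ((Equiv.Perm.sign (σ * Equiv.swap a b) : ℤ) : R) * _ = _
    rw [h1, h2]
    push_cast
    rw [neg_mul]
  have hS : ∑ σ, f σ = - ∑ σ, f σ := by
    have h3 : ∑ σ, f σ = ∑ σ, f (σ * Equiv.swap a b) :=
      (Equiv.sum_comp (Equiv.mulRight (Equiv.swap a b)) f).symm
    conv_lhs => rw [h3]
    calc ∑ σ : Equiv.Perm (Fin n), f (σ * Equiv.swap a b)
        = ∑ σ : Equiv.Perm (Fin n), - f σ := Finset.sum_congr rfl (fun σ _ => key σ)
      _ = - ∑ σ : Equiv.Perm (Fin n), f σ := Finset.sum_neg_distrib _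
  have h4 : (2 : R) * ∑ σ, f σ = 0 := by
    rw [two_mul]
    nth_rewrite 2 [hS]
    rw [add_neg_cancel]
  rcases mul_eq_zero.mp h4 with h | h
  · exact absurd h two_ne_zero
  · exact h

lemma card_bijective_filter (n : ℕ) :
    (Finset.univ.filter fun g : Fin n → Fin n => Function.Bijective g).card
      = n.factorial := by
  classical
  have h1 : (Finset.univ.filter fun g : Fin n → Fin n => Function.Bijective g).card
      = Fintype.card {g : Fin n → Fin n // Function.Bijective g} :=
    (Fintype.card_subtype _).symm
  rw [h1]
  have E2 : {g : Fin n → Fin n // Function.Bijective g} ≃ Equiv.Perm (Fin n) :=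
    { toFun := fun g => Equiv.ofBijective g.1 g.2
      invFun := fun π => ⟨π, π.bijective⟩
      left_inv := fun g => Subtype.ext rfl
      right_inv := fun π => Equiv.ext fun x => rfl }
  rw [Fintype.card_congr E2, Fintype.card_perm, Fintype.card_fin]


end FrobeniusHelpers

/-- **Frobenius's theorem on the degree-`n` factor.** For an `n`-dimensional
representation `ρ : G → GL(n, ℂ)` of a finite group `G` with character
`χ(g) = tr ρ(g)` and Frobenius `n`-character `χ_n`, one has in `ℂ[x_g : g ∈ G]`:
`(1/n!) Σ_{h₁,…,h_n ∈ G} χ_n(h₁, …, h_n)·x_{h₁}⋯x_{h_n} = det(Σ_{g∈G} x_g ρ(g))`. -/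
theorem frobenius_polynomial_eq_det
    {G : Type} [Group G] [Fintype G] [DecidableEq G] (n : ℕ)
    (ρ : G →* Matrix.GeneralLinearGroup (Fin n) ℂ) :
    ((n.factorial : ℂ))⁻¹ • ∑ h : Fin n → G,
        frobChar (fun g => Matrix.trace ((ρ g : Matrix (Fin n) (Fin n) ℂ))) n h •
          ∏ i, (MvPolynomial.X (h i) : MvPolynomial G ℂ) =
      Matrix.det ((∑ g : G, (MvPolynomial.X g : MvPolynomial G ℂ) •
        ((ρ g : Matrix (Fin n) (Fin n) ℂ).map MvPolynomial.C) :
        Matrix (Fin n) (Fin n) (MvPolynomial G ℂ))) := by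
  classical
  set χ : G → ℂ := fun g => Matrix.trace ((ρ g : Matrix (Fin n) (Fin n) ℂ)) with hχ
  set Mmat : Matrix (Fin n) (Fin n) (MvPolynomial G ℂ) :=
    ∑ g : G, (MvPolynomial.X g : MvPolynomial G ℂ) •
      ((ρ g : Matrix (Fin n) (Fin n) ℂ).map MvPolynomial.C) with hMmat
  let φ : G →* Matrix (Fin n) (Fin n) ℂ :=
    (Units.coeHom (Matrix (Fin n) (Fin n) ℂ)).comp ρ
  have stepA : ∀ a b : Fin n, Mmat a b
      = ∑ g' : G, MvPolynomial.X g' *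
          MvPolynomial.C ((ρ g' : Matrix (Fin n) (Fin n) ℂ) a b) := by
    intro a b
    rw [hMmat]
    rw [Matrix.sum_apply]
    apply Finset.sum_congr rfl
    intro g' _
    rw [Matrix.smul_apply, Matrix.map_apply, smul_eq_mul]
  have step2 : ∀ σ : Equiv.Perm (Fin n),
      ∑ h : Fin n → G, (((∏ c ∈ σ.cycleFactorsFinset, χ (cycleProd h c)) *
          ∏ i ∈ Finset.univ.filter (fun i => σ i = i), χ (h i)) •
          ∏ i, (MvPolynomial.X (h i) : MvPolynomial G ℂ))
      = ∑ g : Fin n → Fin n, ∏ i, Mmat (g i) (g (σ i)) := by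
    intro σ
    have hrhs : ∀ g : Fin n → Fin n, ∏ i, Mmat (g i) (g (σ i))
        = ∑ h : Fin n → G, ∏ i, (MvPolynomial.X (h i) *
            MvPolynomial.C ((ρ (h i) : Matrix (Fin n) (Fin n) ℂ) (g i) (g (σ i)))) := by
      intro g
      simp_rw [stepA]
      rw [Fintype.prod_sum]
    simp_rw [hrhs]
    rw [Finset.sum_comm]
    apply Finset.sum_congr rfl
    intro h _
    have h1 : ∀ g : Fin n → Fin n,
        ∏ i, (MvPolynomial.X (h i) *
          MvPolynomial.C ((ρ (h i) : Matrix (Fin n) (Fin n) ℂ) (g i) (g (σ i))))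
        = (∏ i, (MvPolynomial.X (h i) : MvPolynomial G ℂ)) *
          MvPolynomial.C (∏ i, (ρ (h i) : Matrix (Fin n) (Fin n) ℂ) (g i) (g (σ i))) := by
      intro g
      rw [Finset.prod_mul_distrib, map_prod]
    simp_rw [h1]
    rw [← Finset.mul_sum, ← map_sum]
    rw [claimC_univ (fun i => ((ρ (h i) : Matrix (Fin n) (Fin n) ℂ))) σ]
    have h2 : ∀ c : Equiv.Perm (Fin n),
        Matrix.trace (cycleProd (fun i => ((ρ (h i) : Matrix (Fin n) (Fin n) ℂ))) c)
          = χ (cycleProd h c) := by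
      intro c
      rw [show (fun i => ((ρ (h i) : Matrix (Fin n) (Fin n) ℂ))) = fun i => φ (h i)
        from rfl]
      rw [cycleProd_hom φ h c]
      rfl
    simp_rw [h2]
    rw [MvPolynomial.smul_eq_C_mul, mul_comm]
  have expand : (∑ h : Fin n → G, frobChar χ n h •
      ∏ i, (MvPolynomial.X (h i) : MvPolynomial G ℂ))
      = ∑ σ : Equiv.Perm (Fin n), ((Equiv.Perm.sign σ : ℤ) : ℂ) •
          (∑ g : Fin n → Fin n, ∏ i, Mmat (g i) (g (σ i))) := by
    unfold frobChar
    simp_rw [Finset.sum_smul]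
    rw [Finset.sum_comm]
    apply Finset.sum_congr rfl
    intro σ _
    rw [← step2 σ]
    simp_rw [mul_smul]
    rw [Finset.smul_sum]
  rw [expand]
  have hsm : ∀ (z : ℤ) (p : MvPolynomial G ℂ),
      ((z : ℂ)) • p = ((z : MvPolynomial G ℂ)) * p := by
    intro z p
    rw [MvPolynomial.smul_eq_C_mul, map_intCast]
  have swap2 : ∑ σ : Equiv.Perm (Fin n), ((Equiv.Perm.sign σ : ℤ) : ℂ) •
      (∑ g : Fin n → Fin n, ∏ i, Mmat (g i) (g (σ i)))
      = ∑ g : Fin n → Fin n, ∑ σ : Equiv.Perm (Fin n),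
          ((Equiv.Perm.sign σ : ℤ) : MvPolynomial G ℂ) * ∏ i, Mmat (g i) (g (σ i)) := by
    simp_rw [Finset.smul_sum]
    rw [Finset.sum_comm]
    apply Finset.sum_congr rfl
    intro g _
    apply Finset.sum_congr rfl
    intro σ _
    rw [hsm]
  rw [swap2]
  have hE : ∀ g : Fin n → Fin n,
      (∑ σ : Equiv.Perm (Fin n),
        ((Equiv.Perm.sign σ : ℤ) : MvPolynomial G ℂ) * ∏ i, Mmat (g i) (g (σ i)))
      = if Function.Bijective g then Mmat.det else 0 := by
    intro g
    by_cases hg : Function.Bijective g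
    · rw [if_pos hg, sign_sum_bij Mmat g hg]
    · rw [if_neg hg]
      exact sign_sum_nonbij Mmat g
        (fun hinj => hg (Finite.injective_iff_bijective.mp hinj))
  simp_rw [hE]
  rw [Finset.sum_ite, Finset.sum_const_zero, add_zero, Finset.sum_const,
    card_bijective_filter n]
  rw [← Nat.cast_smul_eq_nsmul ℂ, smul_smul,
    inv_mul_cancel₀ (Nat.cast_ne_zero.mpr n.factorial_ne_zero), one_smul]
end
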